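/- arXiv:2403.01117 — 6 statements merged into one kernel-verified Lean document; each statement's English description precedes it below -/
import Mathlib

section
/- Let α = e^{2πi/3} and Δ(k) = e^{ik} + e^{-ik} + α(e^{iαk} + e^{-iαk}) + α²(e^{iα²k} + e^{-iα²k}). Then for every real k, Δ(k) = 2[cos k − cos(k/2)cosh(√3k/2) − √3 sin(k/2) sinh(√3k/2)] (in particular Δ(k) ∈ ℝ), and if k > 0 satisfies Δ(k) = 0, then there exists an integer n ≥ 1 such that (2n−1)π < k < 2nπ; in particular Δ has no zero in the interval (0, π]. -/
noncomputable def cubeRoot : ℂ := Complex.exp (2 * Real.pi * Complex.I / 3)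

noncomputable def Δ (k : ℂ) : ℂ :=
  Complex.exp (Complex.I * k) + Complex.exp (-(Complex.I * k)) +
  cubeRoot * (Complex.exp (Complex.I * cubeRoot * k) + Complex.exp (-(Complex.I * cubeRoot * k))) +
  cubeRoot ^ 2 * (Complex.exp (Complex.I * cubeRoot ^ 2 * k) +
    Complex.exp (-(Complex.I * cubeRoot ^ 2 * k)))

/-!
Writing `α = -1/2 + (√3/2) i`, the three exponential pairs of `Δ` are `2 cos` of `k`, `αk`, `α²k`,
and `α cos(αk) + α² cos(α²k)` is twice the real part of `α cos(αk)`; this gives the closed form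
`Δ k = 2 (cos k - A k)` with `A k = cos(k/2) cosh(√3k/2) + √3 sin(k/2) sinh(√3k/2)`.

Where `sin k ≥ 0`, `cos(k/2)` and `sin(k/2)` have the same sign, so
`|A k| ≥ (|cos(k/2)| + |sin(k/2)|) sinh(√3k/2) ≥ sinh(√3k/2)`, which exceeds `1 ≥ |cos k|` once
`k ≥ 2`; on `(0, π]` one has directly `cos k < cos(k/2) ≤ A k`. Hence a positive zero has
`sin k < 0`, i.e. lies in some `((2n-1)π, 2nπ)`.
-/

open Real

lemma cubeRoot_eq : cubeRoot = -(1 / 2) + (√3 / 2 : ℝ) * Complex.I := by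
  have h : 2 * π * Complex.I / 3 = (π - π / 3 : ℝ) * Complex.I := by push_cast; ring
  rw [cubeRoot, h, Complex.exp_mul_I, ← Complex.ofReal_cos, ← Complex.ofReal_sin, cos_pi_sub,
    sin_pi_sub, cos_pi_div_three, sin_pi_div_three]
  push_cast; ring

lemma cubeRoot_sq_eq : cubeRoot ^ 2 = -(1 / 2) - (√3 / 2 : ℝ) * Complex.I := by
  have h3 : ((√3 : ℝ) : ℂ) ^ 2 = 3 := by norm_cast; simp
  rw [cubeRoot_eq]; push_cast
  linear_combination (3 / 4 : ℂ) * Complex.I_sq + Complex.I ^ 2 / 4 * h3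

lemma Δ_eq_cos (z : ℂ) : Δ z = 2 * (Complex.cos z + cubeRoot * Complex.cos (cubeRoot * z) +
    cubeRoot ^ 2 * Complex.cos (cubeRoot ^ 2 * z)) := by
  have h (w : ℂ) : Complex.exp (Complex.I * w) + Complex.exp (-(Complex.I * w)) = 2 * Complex.cos w := by
    rw [Complex.two_cos, mul_comm, neg_mul]
  rw [Δ, mul_assoc Complex.I cubeRoot, mul_assoc Complex.I (cubeRoot ^ 2), h, h, h]
  ring

noncomputable def deltaReal (k : ℝ) : ℝ :=
  cos k - cos (k / 2) * cosh (√3 * k / 2) - √3 * sin (k / 2) * sinh (√3 * k / 2)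

lemma Δ_ofReal (k : ℝ) : Δ k = (2 * deltaReal k : ℝ) := by
  have h1 : cubeRoot * k = (-(k / 2) : ℝ) + (√3 * k / 2 : ℝ) * Complex.I := by
    rw [cubeRoot_eq]; push_cast; ring
  have h2 : cubeRoot ^ 2 * k = (-(k / 2) : ℝ) + (-(√3 * k / 2) : ℝ) * Complex.I := by
    rw [cubeRoot_sq_eq]; push_cast; ring
  rw [Δ_eq_cos, h1, h2, Complex.cos_add_mul_I, Complex.cos_add_mul_I, cubeRoot_sq_eq, cubeRoot_eq,
    deltaReal]
  push_cast
  simp only [Complex.cos_neg, Complex.sin_neg, Complex.cosh_neg, Complex.sinh_neg]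
  linear_combination (2 * √3 * Complex.sin (k / 2) * Complex.sinh (√3 * k / 2)) * Complex.I_sq

lemma deltaReal_neg {k : ℝ} (hk : 0 < k) (hkπ : k ≤ π) : deltaReal k < 0 := by
  have hcos : cos k < cos (k / 2) := cos_lt_cos_of_nonneg_of_le_pi (by linarith) hkπ (by linarith)
  have hcos_nonneg : 0 ≤ cos (k / 2) := cos_nonneg_of_mem_Icc ⟨by linarith [pi_pos], by linarith⟩
  have hsin_nonneg : 0 ≤ sin (k / 2) := sin_nonneg_of_nonneg_of_le_pi (by linarith) (by linarith)
  have hcosh : cos (k / 2) ≤ cos (k / 2) * cosh (√3 * k / 2) :=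
    le_mul_of_one_le_right hcos_nonneg (one_le_cosh _)
  have hsinh : 0 ≤ sinh (√3 * k / 2) := sinh_nonneg_iff.mpr (by positivity)
  have : 0 ≤ √3 * sin (k / 2) * sinh (√3 * k / 2) := by positivity
  unfold deltaReal
  linarith

lemma one_le_abs_sin_add_abs_cos (x : ℝ) : 1 ≤ |sin x| + |cos x| := by
  have hs : sin x ^ 2 ≤ |sin x| := by
    rw [← sq_abs, sq]; exact mul_le_of_le_one_left (abs_nonneg _) (abs_sin_le_one x)
  have hc : cos x ^ 2 ≤ |cos x| := by
    rw [← sq_abs, sq]; exact mul_le_of_le_one_left (abs_nonneg _) (abs_cos_le_one x)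
  linarith [sin_sq_add_cos_sq x]

lemma abs_mul_add_mul_of_mul_nonneg {a b p q : ℝ} (hab : 0 ≤ a * b) (hp : 0 ≤ p) (hq : 0 ≤ q) :
    |a * p + b * q| = |a| * p + |b| * q := by
  rcases mul_nonneg_iff.mp hab with ⟨ha, hb⟩ | ⟨ha, hb⟩
  · rw [abs_of_nonneg ha, abs_of_nonneg hb, abs_of_nonneg (by positivity)]
  · rw [abs_of_nonpos ha, abs_of_nonpos hb, abs_of_nonpos (by nlinarith)]
    ring

lemma one_lt_abs_cos_mul_cosh_add_sin_mul_sinh {k : ℝ} (hk : 2 ≤ k) (hsin : 0 ≤ sin k) :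
    1 < |cos (k / 2) * cosh (√3 * k / 2) + sin (k / 2) * (√3 * sinh (√3 * k / 2))| := by
  have h3 : 1 < √3 := by rw [lt_sqrt zero_le_one]; norm_num
  have hsinh : 1 < sinh (√3 * k / 2) :=
    (by nlinarith : 1 < √3 * k / 2).trans (self_lt_sinh_iff.mpr (by positivity))
  have hsame : 0 ≤ cos (k / 2) * sin (k / 2) := by
    have := sin_two_mul (k / 2)
    rw [mul_div_cancel₀ k two_ne_zero] at this
    nlinarith
  rw [abs_mul_add_mul_of_mul_nonneg hsame (cosh_pos _).le (by positivity)]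
  have hc : |cos (k / 2)| * sinh (√3 * k / 2) ≤ |cos (k / 2)| * cosh (√3 * k / 2) :=
    mul_le_mul_of_nonneg_left (sinh_lt_cosh _).le (abs_nonneg _)
  have hs : |sin (k / 2)| * sinh (√3 * k / 2) ≤ |sin (k / 2)| * (√3 * sinh (√3 * k / 2)) :=
    mul_le_mul_of_nonneg_left (le_mul_of_one_le_left (by positivity) h3.le) (abs_nonneg _)
  calc 1 < sinh (√3 * k / 2) := hsinh
    _ ≤ (|sin (k / 2)| + |cos (k / 2)|) * sinh (√3 * k / 2) :=
      le_mul_of_one_le_left (by positivity) (one_le_abs_sin_add_abs_cos _)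
    _ ≤ _ := by linarith

lemma deltaReal_ne_zero {k : ℝ} (hk : 0 < k) (hsin : 0 ≤ sin k) : deltaReal k ≠ 0 := by
  rcases le_or_gt k π with hkπ | hπk
  · exact (deltaReal_neg hk hkπ).ne
  · have h := one_lt_abs_cos_mul_cosh_add_sin_mul_sinh (by linarith [pi_gt_three]) hsin
    have hcos := abs_cos_le_one k
    intro h0
    have : cos k = cos (k / 2) * cosh (√3 * k / 2) + sin (k / 2) * (√3 * sinh (√3 * k / 2)) := by
      unfold deltaReal at h0; linarith
    rw [← this] at h
    linarith

lemma exists_nat_mem_Ioo_of_sin_neg {k : ℝ} (hk : 0 < k) (hsin : sin k < 0) :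
    ∃ n : ℕ, 1 ≤ n ∧ (2 * (n : ℝ) - 1) * π < k ∧ k < 2 * (n : ℝ) * π := by
  have h2π : 0 < 2 * π := by positivity
  set n := ⌈k / (2 * π)⌉₊
  have hn : k ≤ n * (2 * π) := (div_le_iff₀ h2π).mp (Nat.le_ceil _)
  have hn' : (n - 1) * (2 * π) < k :=
    (lt_div_iff₀ h2π).mp (by linarith [Nat.ceil_lt_add_one (div_pos hk h2π).le])
  refine ⟨n, Nat.one_le_iff_ne_zero.mpr (Nat.ceil_pos.mpr (div_pos hk h2π)).ne', ?_, ?_⟩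
  · by_contra! h
    have : 0 ≤ sin (k - (n - 1 : ℤ) * (2 * π)) :=
      sin_nonneg_of_nonneg_of_le_pi (by push_cast; linarith) (by push_cast; linarith)
    rw [sin_sub_int_mul_two_pi] at this
    linarith
  · have : k ≠ n * (2 * π) := fun h => hsin.ne <| by
      rw [h, ← sub_zero (n * (2 * π)), sin_nat_mul_two_pi_sub, sin_zero, neg_zero]
    linarith [hn.lt_of_ne this]

theorem stmt_1 :
    (∀ k : ℝ, Δ k =
      ((2 * (Real.cos k - Real.cos (k / 2) * Real.cosh (Real.sqrt 3 * k / 2)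
        - Real.sqrt 3 * Real.sin (k / 2) * Real.sinh (Real.sqrt 3 * k / 2)) : ℝ) : ℂ)) ∧
    (∀ k : ℝ, 0 < k → Δ k = 0 →
      ∃ n : ℕ, 1 ≤ n ∧ (2 * (n : ℝ) - 1) * Real.pi < k ∧ k < 2 * (n : ℝ) * Real.pi) ∧
    (∀ k : ℝ, 0 < k → k ≤ Real.pi → Δ k ≠ 0) := by
  have deltaReal_eq_zero {k : ℝ} (h : Δ k = 0) : deltaReal k = 0 := by
    rw [Δ_ofReal, Complex.ofReal_eq_zero] at h
    exact (mul_eq_zero.mp h).resolve_left two_ne_zero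
  refine ⟨Δ_ofReal, fun k hk hΔ => ?_, fun k hk hkπ hΔ => ?_⟩
  · refine exists_nat_mem_Ioo_of_sin_neg hk (not_le.mp fun hsin => ?_)
    exact deltaReal_ne_zero hk hsin (deltaReal_eq_zero hΔ)
  · exact (deltaReal_neg hk hkπ).ne (deltaReal_eq_zero hΔ)
end

section
/- Let c ∈ (0,1). (i) Every real k > 0 satisfying cosh(k(1−c)) sin(kc) = cos(kc) sinh(k(1−c)) satisfies cos(kc) ≠ 0, and hence tan(kc) = tanh(k(1−c)). (ii) There exist N ∈ ℕ and C > 0 such that for every integer n ≥ N there exists k ∈ ( nπ/c, (n + 1/2)π/c ) with cosh(k(1−c)) sin(kc) = cos(kc) sinh(k(1−c)) and | k − (π/c)(n + 1/4) | ≤ C e^{−2π n (1−c)/c}. -/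
open Real Set

-- tanh is monotone on ℝ
lemma tanh_mono {u v : ℝ} (h : u ≤ v) : Real.tanh u ≤ Real.tanh v := by
  rw [Real.tanh_eq_sinh_div_cosh, Real.tanh_eq_sinh_div_cosh,
    div_le_div_iff₀ (Real.cosh_pos u) (Real.cosh_pos v)]
  nlinarith [Real.sinh_sub v u, Real.sinh_nonneg_iff.mpr (by linarith : (0:ℝ) ≤ v - u),
    Real.cosh_pos u, Real.cosh_pos v]

lemma one_sub_tanh_le {x : ℝ} (hx : 0 ≤ x) :
    1 - Real.tanh x ≤ 2 * Real.exp (-(2 * x)) := by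
  have hc := Real.cosh_pos x
  have h1 : 1 - Real.tanh x = Real.exp (-x) / Real.cosh x := by
    rw [Real.tanh_eq_sinh_div_cosh, ← Real.cosh_sub_sinh x]
    field_simp
  have h2 : Real.exp x / 2 ≤ Real.cosh x := by
    rw [Real.cosh_eq]
    have := Real.exp_pos (-x)
    linarith
  rw [h1]
  have hex := Real.exp_pos x
  have henx := Real.exp_pos (-x)
  calc Real.exp (-x) / Real.cosh x ≤ Real.exp (-x) / (Real.exp x / 2) := by
        apply div_le_div_of_nonneg_left henx.le (by linarith) h2
    _ = 2 * Real.exp (-(2*x)) := by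
        rw [show (-(2*x)) = -x + -x by ring, Real.exp_add]
        field_simp [Real.exp_neg]
        rw [← Real.exp_add, neg_add_cancel, Real.exp_zero]

lemma tan_le_aux {x : ℝ} (hx0 : 0 ≤ x) (hx : x ≤ π/4) :
    Real.tan x ≤ 1 - (π/4 - x) := by
  have hmono : MonotoneOn (fun y => Real.tan y - y) (Icc 0 (π/4)) := by
    have hpi := Real.pi_pos
    have hcos : ∀ y ∈ Icc (0:ℝ) (π/4), Real.cos y ≠ 0 := by
      intro y hy
      have : Real.cos y > 0 := Real.cos_pos_of_mem_Ioo ⟨by linarith [hy.1], by linarith [hy.2]⟩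
      linarith
    apply monotoneOn_of_deriv_nonneg (convex_Icc _ _)
    · exact ((Real.continuousOn_tan.mono (fun y hy => hcos y hy)).sub continuousOn_id)
    · intro y hy
      rw [interior_Icc] at hy
      have h : HasDerivAt (fun y => Real.tan y - y) (1 / Real.cos y ^ 2 - 1) y :=
        (Real.hasDerivAt_tan (hcos y ⟨hy.1.le, hy.2.le⟩)).sub (hasDerivAt_id y)
      exact h.differentiableAt.differentiableWithinAt
    · intro y hy
      rw [interior_Icc] at hy
      have h : HasDerivAt (fun y => Real.tan y - y) (1 / Real.cos y ^ 2 - 1) y :=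
        (Real.hasDerivAt_tan (hcos y ⟨hy.1.le, hy.2.le⟩)).sub (hasDerivAt_id y)
      rw [h.deriv]
      have hc1 : Real.cos y ≤ 1 := Real.cos_le_one y
      have hc0 : 0 < Real.cos y := Real.cos_pos_of_mem_Ioo ⟨by linarith [hy.1], by linarith [hy.2]⟩
      have : Real.cos y ^ 2 ≤ 1 := by nlinarith
      have h2 : (1:ℝ) ≤ 1 / Real.cos y ^ 2 := by
        rw [le_div_iff₀ (by positivity)]; linarith
      linarith
  have := hmono (Set.mem_Icc.mpr ⟨hx0, hx⟩) (Set.mem_Icc.mpr ⟨by positivity, le_refl _⟩) hx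
  simp only [Real.tan_pi_div_four] at this
  linarith

set_option maxHeartbeats 1000000 in
theorem stmt_12 (c : ℝ) (hc : c ∈ Set.Ioo (0:ℝ) 1) :
    (∀ k : ℝ, 0 < k →
      Real.cosh (k * (1 - c)) * Real.sin (k * c) = Real.cos (k * c) * Real.sinh (k * (1 - c)) →
      Real.cos (k * c) ≠ 0 ∧ Real.tan (k * c) = Real.tanh (k * (1 - c))) ∧
    (∃ (N : ℕ) (C : ℝ), 0 < C ∧ ∀ n : ℕ, N ≤ n →
      ∃ k ∈ Set.Ioo ((n : ℝ) * Real.pi / c) (((n : ℝ) + 1/2) * Real.pi / c),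
        Real.cosh (k * (1 - c)) * Real.sin (k * c) =
          Real.cos (k * c) * Real.sinh (k * (1 - c)) ∧
        |k - (Real.pi / c) * ((n : ℝ) + 1/4)| ≤
          C * Real.exp (-(2 * Real.pi * n * (1 - c) / c))) := by
  obtain ⟨hc0, hc1⟩ := hc
  have hπ := Real.pi_pos
  have h1c : 0 < 1 - c := by linarith
  have part1 : ∀ k : ℝ, 0 < k →
      Real.cosh (k * (1 - c)) * Real.sin (k * c) = Real.cos (k * c) * Real.sinh (k * (1 - c)) →
      Real.cos (k * c) ≠ 0 ∧ Real.tan (k * c) = Real.tanh (k * (1 - c)) := by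
    intro k hk heq
    have hch := Real.cosh_pos (k * (1 - c))
    have hcos : Real.cos (k * c) ≠ 0 := by
      intro h0
      rw [h0, zero_mul] at heq
      have hsin : Real.sin (k * c) = 0 := by
        rcases mul_eq_zero.mp heq with h | h
        · exact absurd h hch.ne'
        · exact h
      have hpy := Real.sin_sq_add_cos_sq (k * c)
      rw [hsin, h0] at hpy
      norm_num at hpy
    refine ⟨hcos, ?_⟩
    rw [Real.tan_eq_sin_div_cos, Real.tanh_eq_sinh_div_cosh,
      div_eq_div_iff hcos hch.ne']
    linarith
  refine ⟨part1, 1, 2/c, by positivity, ?_⟩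
  intro n hn
  have hnn : (1:ℝ) ≤ (n:ℝ) := by exact_mod_cast hn
  set a : ℝ := (n:ℝ) * π / c with ha_def
  set b : ℝ := ((n:ℝ) + 1/4) * π / c with hb_def
  have ha0 : 0 < a := by
    apply div_pos _ hc0
    positivity
  have hab : a < b := by
    rw [ha_def, hb_def, div_lt_div_iff₀ hc0 hc0]
    nlinarith
  have hac : a * c = (n:ℝ) * π := div_mul_cancel₀ _ hc0.ne'
  have hbc : b * c = (n:ℝ) * π + π/4 := by
    rw [hb_def, div_mul_cancel₀ _ hc0.ne']
    ring
  have hcosn : Real.cos ((n:ℝ) * π) = (-1)^n := by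
    simpa using Real.cos_nat_mul_pi_sub 0 n
  set f : ℝ → ℝ := fun k =>
    Real.cosh (k * (1 - c)) * Real.sin (k * c) - Real.cos (k * c) * Real.sinh (k * (1 - c))
    with hf_def
  have hf_cont : ContinuousOn f (Set.Icc a b) := by
    apply Continuous.continuousOn
    fun_prop
  have hsa : 0 < Real.sinh (a * (1 - c)) :=
    Real.sinh_pos_iff.mpr (by positivity)
  have hfa : f a = -((-1)^n * Real.sinh (a * (1 - c))) := by
    simp [hf_def, hac, Real.sin_nat_mul_pi, hcosn]
  have hfb : f b = (-1)^n * (Real.sqrt 2 / 2 * Real.exp (-(b * (1 - c)))) := by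
    rw [hf_def]
    simp only [hbc, Real.sin_add, Real.cos_add, Real.sin_nat_mul_pi, hcosn,
      Real.sin_pi_div_four, Real.cos_pi_div_four]
    rw [← Real.cosh_sub_sinh (b * (1 - c))]
    ring
  have hs2 : 0 < Real.sqrt 2 / 2 * Real.exp (-(b * (1 - c))) := by positivity
  have hroot : ∃ k ∈ Set.Ioo a b, f k = 0 := by
    rcases Nat.even_or_odd n with he | ho
    · have hpow : ((-1:ℝ))^n = 1 := he.neg_one_pow
      have h0 : (0:ℝ) ∈ Set.Ioo (f a) (f b) := by
        rw [Set.mem_Ioo, hfa, hfb, hpow]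
        constructor <;> nlinarith [hsa, hs2]
      obtain ⟨k, hk, hfk⟩ := intermediate_value_Ioo hab.le hf_cont h0
      exact ⟨k, hk, hfk⟩
    · have hpow : ((-1:ℝ))^n = -1 := ho.neg_one_pow
      have h0 : (0:ℝ) ∈ Set.Ioo (f b) (f a) := by
        rw [Set.mem_Ioo, hfa, hfb, hpow]
        constructor <;> nlinarith [hsa, hs2]
      obtain ⟨k, hk, hfk⟩ := intermediate_value_Ioo' hab.le hf_cont h0
      exact ⟨k, hk, hfk⟩
  obtain ⟨k, hkI, hfk⟩ := hroot
  have heq : Real.cosh (k * (1 - c)) * Real.sin (k * c)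
      = Real.cos (k * c) * Real.sinh (k * (1 - c)) := by
    have := hfk
    rw [hf_def] at this
    linarith [sub_eq_zero.mp this]
  have hk0 : 0 < k := ha0.trans hkI.1
  have htan := (part1 k hk0 heq).2
  set θ : ℝ := k * c - (n:ℝ) * π with hθ_def
  have hθ0 : 0 < θ := by
    have := mul_lt_mul_of_pos_right hkI.1 hc0
    rw [hac] at this
    simp [hθ_def]
    linarith
  have hθ4 : θ < π/4 := by
    have := mul_lt_mul_of_pos_right hkI.2 hc0
    rw [hbc] at this
    simp [hθ_def]
    linarith
  have htanθ : Real.tan θ = Real.tanh (k * (1 - c)) := by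
    rw [← htan, hθ_def]
    have : k * c = (k * c - (n:ℝ) * π) + (n:ℝ) * π := by ring
    conv_rhs => rw [this]
    exact (Real.tan_add_nat_mul_pi _ n).symm
  set t₀ : ℝ := Real.tanh (a * (1 - c)) with ht0_def
  have htmono : t₀ ≤ Real.tanh (k * (1 - c)) := by
    exact tanh_mono (mul_le_mul_of_nonneg_right hkI.1.le h1c.le)
  set δ : ℝ := 1 - t₀ with hδ_def
  have ht1 : t₀ < 1 := by
    rw [ht0_def, Real.tanh_eq_sinh_div_cosh, div_lt_one (Real.cosh_pos _)]
    have := Real.cosh_sub_sinh (a * (1 - c))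
    have := Real.exp_pos (-(a * (1 - c)))
    linarith
  have hδpos : 0 < δ := by simp [hδ_def]; linarith
  have hδle : δ ≤ 2 * Real.exp (-(2 * (a * (1 - c)))) := by
    rw [hδ_def, ht0_def]
    exact one_sub_tanh_le (by positivity)
  have hlow : π/4 - δ ≤ θ := by
    by_contra hcon
    push_neg at hcon
    have hx0 : 0 ≤ π/4 - δ := by linarith
    have h1 : Real.tan θ < Real.tan (π/4 - δ) :=
      Real.tan_lt_tan_of_nonneg_of_lt_pi_div_two hθ0.le (by linarith) hcon
    have h2 : Real.tan (π/4 - δ) ≤ 1 - (π/4 - (π/4 - δ)) :=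
      tan_le_aux hx0 (by linarith)
    rw [htanθ] at h1
    have : (1:ℝ) - (π/4 - (π/4 - δ)) = t₀ := by rw [hδ_def]; ring
    linarith
  have hexp_eq : 2 * (a * (1 - c)) = 2 * π * (n:ℝ) * (1 - c) / c := by
    rw [ha_def, eq_div_iff hc0.ne']
    field_simp
  refine ⟨k, ⟨hkI.1, lt_trans hkI.2 ?_⟩, heq, ?_⟩
  · rw [hb_def, div_lt_div_iff₀ hc0 hc0]
    nlinarith
  · have hkval : k - π / c * ((n:ℝ) + 1/4) = (θ - π/4) / c := by
      rw [hθ_def]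
      field_simp
      ring
    rw [hkval, abs_of_nonpos (by apply div_nonpos_of_nonpos_of_nonneg <;> linarith)]
    rw [← hexp_eq]
    have hEpos := Real.exp_pos (-(2 * (a * (1 - c))))
    rw [← neg_div, div_le_iff₀ hc0]
    calc -(θ - π/4) ≤ δ := by linarith
      _ ≤ 2 * Real.exp (-(2 * (a * (1 - c)))) := hδle
      _ = 2 / c * Real.exp (-(2 * (a * (1 - c)))) * c := by field_simp
end

section
/- Let b ∈ (0,1) and ν_n = (π/b)(n + 1/4). Let (k_n)_{n≥1} be positive reals satisfying sin(k_n b) cosh(k_n(1−b)) = cos(k_n b) sinh(k_n(1−b)) and |k_n − ν_n| ≤ C₀ e^{−2π(1−b)n/b} for some C₀ > 0 and all n ≥ 1. Define φ_n(x) = sin(k_n x) for x ∈ [0,b] and φ_n(x) = ( sin(k_n b)/sinh(k_n(1−b)) ) sinh(k_n(1−x)) for x ∈ [b,1], and ψ_n(x) = sin(ν_n x) for x ∈ [0,b] and ψ_n(x) = (√2/2)(−1)^n e^{−ν_n (x−b)} for x ∈ [b,1]. Then there exists C > 0 such that for all n ≥ 1, sup_{x ∈ [0,1]} | φ_n(x)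 − ψ_n(x) | ≤ C e^{−π(1−b)n/b}. -/
set_option maxHeartbeats 1000000

lemma aux_sin_lip (u v : ℝ) : |Real.sin u - Real.sin v| ≤ |u - v| := by
  rw [Real.sin_sub_sin]
  calc |2 * Real.sin ((u - v) / 2) * Real.cos ((u + v) / 2)|
      = 2 * |Real.sin ((u - v) / 2)| * |Real.cos ((u + v) / 2)| := by
        rw [abs_mul, abs_mul, abs_two]
    _ ≤ 2 * |(u - v) / 2| * 1 := by
        refine mul_le_mul (mul_le_mul_of_nonneg_left Real.abs_sin_le_abs (by norm_num))
          (Real.abs_cos_le_one _) (abs_nonneg _) (by positivity)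
    _ = |u - v| := by rw [abs_div, abs_two]; ring

lemma aux_exp_lip {u v : ℝ} (hu : 0 ≤ u) (hv : 0 ≤ v) :
    |Real.exp (-u) - Real.exp (-v)| ≤ |u - v| := by
  wlog h : v ≤ u generalizing u v
  · rw [abs_sub_comm, abs_sub_comm u v]
    exact this hv hu (le_of_not_ge h)
  rw [abs_sub_comm, abs_of_nonneg (sub_nonneg.2 (Real.exp_le_exp.2 (by linarith))),
    abs_of_nonneg (sub_nonneg.2 h)]
  have e1 : Real.exp (-v) * Real.exp (v - u) = Real.exp (-u) := by
    rw [← Real.exp_add]; congr 1; ring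
  have h1 : (v - u) + 1 ≤ Real.exp (v - u) := Real.add_one_le_exp _
  have h2 : Real.exp (-v) ≤ 1 := Real.exp_le_one_iff.2 (by linarith)
  nlinarith [Real.exp_pos (-v), mul_le_mul_of_nonneg_left h1 (Real.exp_pos (-v)).le]

theorem stmt_13 (b : ℝ) (hb : b ∈ Set.Ioo (0:ℝ) 1)
    (ν : ℕ → ℝ) (hν : ∀ n : ℕ, ν n = (Real.pi / b) * ((n : ℝ) + 1/4))
    (k : ℕ → ℝ) (hkpos : ∀ n : ℕ, 1 ≤ n → 0 < k n)
    (hchar : ∀ n : ℕ, 1 ≤ n →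
      Real.sin (k n * b) * Real.cosh (k n * (1 - b)) =
        Real.cos (k n * b) * Real.sinh (k n * (1 - b)))
    (C₀ : ℝ) (hC₀ : 0 < C₀)
    (hasym : ∀ n : ℕ, 1 ≤ n →
      |k n - ν n| ≤ C₀ * Real.exp (-(2 * Real.pi * (1 - b) * n / b)))
    (φ ψ : ℕ → ℝ → ℝ)
    (hφ : ∀ n : ℕ, ∀ x : ℝ, φ n x =
      if x ≤ b then Real.sin (k n * x)
      else (Real.sin (k n * b) / Real.sinh (k n * (1 - b))) * Real.sinh (k n * (1 - x)))
    (hψ : ∀ n : ℕ, ∀ x : ℝ, ψ n x =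
      if x ≤ b then Real.sin (ν n * x)
      else (Real.sqrt 2 / 2) * (-1 : ℝ) ^ n * Real.exp (-(ν n * (x - b)))) :
    ∃ C : ℝ, 0 < C ∧ ∀ n : ℕ, 1 ≤ n → ∀ x ∈ Set.Icc (0:ℝ) 1,
      |φ n x - ψ n x| ≤ C * Real.exp (-(Real.pi * (1 - b) * n / b)) := by
  obtain ⟨hb0, hb1⟩ := hb
  have hπ := Real.pi_pos
  set a : ℝ := Real.pi * (1 - b) / b with ha_def
  have ha : 0 < a := div_pos (mul_pos hπ (by linarith)) hb0
  have hd : 0 < 1 - Real.exp (-(2*a)) := by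
    have : Real.exp (-(2*a)) < 1 := Real.exp_lt_one_iff.2 (by linarith)
    linarith
  set D : ℝ := 2*C₀ + 1/(1 - Real.exp (-(2*a))) with hD_def
  have hDC : C₀ ≤ D := by
    have : 0 < 1/(1 - Real.exp (-(2*a))) := by positivity
    rw [hD_def]; linarith
  have hD0 : 0 < D := lt_of_lt_of_le hC₀ hDC
  set N : ℕ := ⌈2 * b * C₀ / (Real.pi * a)⌉₊ + 1 with hN_def
  -- choice of N gives the smallness of the perturbation for n ≥ N
  have hNbound : C₀ * Real.exp (-(2*a*(N:ℝ))) ≤ Real.pi / (4*b) := by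
    have hNge : 2 * b * C₀ / (Real.pi * a) ≤ (N:ℝ) := by
      refine le_trans (Nat.le_ceil _) ?_
      rw [hN_def]; push_cast; linarith
    have h2 : 4*b*C₀/Real.pi ≤ 2*a*(N:ℝ) := by
      have := mul_le_mul_of_nonneg_left hNge (by positivity : (0:ℝ) ≤ 2*a)
      have heq : 2*a*(2*b*C₀/(Real.pi*a)) = 4*b*C₀/Real.pi := by
        field_simp; ring
      rw [heq] at this; linarith
    have h1 : 4*b*C₀/Real.pi ≤ Real.exp (2*a*(N:ℝ)) := by
      have := Real.add_one_le_exp (2*a*(N:ℝ)); linarith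
    have hE : (0:ℝ) < Real.exp (2*a*(N:ℝ)) := Real.exp_pos _
    have key : C₀ ≤ Real.pi/(4*b) * Real.exp (2*a*(N:ℝ)) := by
      have hm := mul_le_mul_of_nonneg_left h1
        (by positivity : (0:ℝ) ≤ Real.pi/(4*b))
      have heq : Real.pi/(4*b) * (4*b*C₀/Real.pi) = C₀ := by field_simp
      rw [heq] at hm; linarith
    have hrw : C₀ * Real.exp (-(2*a*(N:ℝ))) = C₀ / Real.exp (2*a*(N:ℝ)) := by
      rw [Real.exp_neg]; ring
    rw [hrw, div_le_iff₀ hE]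
    calc C₀ ≤ Real.pi/(4*b) * Real.exp (2*a*(N:ℝ)) := key
      _ = Real.pi/(4*b) * Real.exp (2*a*(N:ℝ)) := rfl
  -- crude bound |φ| ≤ 1, |ψ| ≤ 1
  have hsin1 : ∀ y : ℝ, |Real.sin y| ≤ 1 := fun y =>
    abs_le.2 ⟨Real.neg_one_le_sin y, Real.sin_le_one y⟩
  have hφabs : ∀ n : ℕ, 1 ≤ n → ∀ x : ℝ, 0 ≤ x → x ≤ 1 → |φ n x| ≤ 1 := by
    intro n hn x hx0 hx1
    have hkn := hkpos n hn
    rw [hφ n x]; split_ifs with h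
    · exact hsin1 _
    · have hx' : b < x := not_le.1 h
      have hSB : 0 < Real.sinh (k n * (1 - b)) :=
        Real.sinh_pos_iff.2 (mul_pos hkn (by linarith))
      have hSA0 : 0 ≤ Real.sinh (k n * (1 - x)) :=
        Real.sinh_nonneg_iff.2 (mul_nonneg hkn.le (by linarith))
      have hSAB : Real.sinh (k n * (1 - x)) ≤ Real.sinh (k n * (1 - b)) :=
        Real.sinh_le_sinh.2 (by nlinarith)
      rw [abs_mul, abs_div, abs_of_nonneg hSA0, abs_of_pos hSB,
        div_mul_eq_mul_div, div_le_one hSB]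
      calc |Real.sin (k n * b)| * Real.sinh (k n * (1 - x))
          ≤ 1 * Real.sinh (k n * (1 - b)) :=
            mul_le_mul (hsin1 _) hSAB hSA0 zero_le_one
        _ = _ := one_mul _
  have hsqrt2 : Real.sqrt 2 ≤ 2 := by
    nlinarith [Real.sq_sqrt (show (0:ℝ) ≤ 2 by norm_num), Real.sqrt_nonneg 2]
  have hsabs' : ∀ n : ℕ, |Real.sqrt 2 / 2 * (-1:ℝ)^n| ≤ 1 := by
    intro n
    rw [abs_mul, abs_pow, abs_neg, abs_one, one_pow, mul_one,
      abs_of_nonneg (by positivity)]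
    linarith
  have hψabs : ∀ n : ℕ, 1 ≤ n → ∀ x : ℝ, 0 ≤ x → x ≤ 1 → |ψ n x| ≤ 1 := by
    intro n hn x hx0 hx1
    have hνpos : 0 < ν n := by rw [hν n]; positivity
    rw [hψ n x]; split_ifs with h
    · exact hsin1 _
    · have hx' : b < x := not_le.1 h
      rw [abs_mul]
      have h1 : |Real.exp (-(ν n * (x - b)))| ≤ 1 := by
        rw [abs_of_pos (Real.exp_pos _)]
        exact Real.exp_le_one_iff.2 (by nlinarith)
      calc |Real.sqrt 2 / 2 * (-1:ℝ)^n| * |Real.exp (-(ν n * (x - b)))|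
          ≤ 1 * 1 := mul_le_mul (hsabs' n) h1 (abs_nonneg _) zero_le_one
        _ = 1 := one_mul _
  have hbnd2 : ∀ n : ℕ, 1 ≤ n → ∀ x : ℝ, 0 ≤ x → x ≤ 1 → |φ n x - ψ n x| ≤ 2 := by
    intro n hn x hx0 hx1
    rw [sub_eq_add_neg]
    refine (abs_add_le _ _).trans ?_
    rw [abs_neg]
    linarith [hφabs n hn x hx0 hx1, hψabs n hn x hx0 hx1]
  -- the key estimate for n ≥ N
  have hkey : ∀ n : ℕ, N ≤ n → 1 ≤ n → ∀ x : ℝ, 0 ≤ x → x ≤ 1 →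
      |φ n x - ψ n x| ≤ D * Real.exp (-(a*(n:ℝ))) := by
    intro n hNn hn x hx0 hx1
    have hkn := hkpos n hn
    have hνpos : 0 < ν n := by rw [hν n]; positivity
    have hn1 : (1:ℝ) ≤ (n:ℝ) := by exact_mod_cast hn
    have hNn' : (N:ℝ) ≤ (n:ℝ) := by exact_mod_cast hNn
    have han : 0 ≤ a*(n:ℝ) := by positivity
    have hasymn : |k n - ν n| ≤ C₀ * Real.exp (-(2*a*(n:ℝ))) := by
      have h := hasym n hn
      have heq : 2 * Real.pi * (1 - b) * (n:ℝ) / b = 2*a*(n:ℝ) := by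
        rw [ha_def]; ring
      rwa [heq] at h
    have hean : Real.exp (-(2*a*(n:ℝ))) ≤ Real.exp (-(a*(n:ℝ))) :=
      Real.exp_le_exp.2 (by linarith)
    have hsm : C₀ * Real.exp (-(2*a*(n:ℝ))) ≤ Real.pi/(4*b) := by
      refine le_trans ?_ hNbound
      have : Real.exp (-(2*a*(n:ℝ))) ≤ Real.exp (-(2*a*(N:ℝ))) :=
        Real.exp_le_exp.2 (by nlinarith)
      nlinarith
    have hklow : Real.pi * (n:ℝ) / b ≤ k n := by
      have h1 := (abs_le.1 hasymn).1
      have h2 : ν n - Real.pi/(4*b) ≤ k n := by linarith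
      have heq : Real.pi/b*((n:ℝ)+1/4) - Real.pi/(4*b) = Real.pi * (n:ℝ) / b := by
        field_simp; ring
      rw [hν n] at h2
      rw [← heq]; linarith
    have hk1 : a*(n:ℝ) ≤ k n * (1 - b) := by
      have h1 : Real.pi * (n:ℝ) / b * (1-b) ≤ k n * (1-b) :=
        mul_le_mul_of_nonneg_right hklow (by linarith)
      have heq : Real.pi * (n:ℝ) / b * (1-b) = a*(n:ℝ) := by
        rw [ha_def]; field_simp
      rw [heq] at h1; linarith
    have hk1a : a ≤ k n * (1 - b) := by nlinarith
    -- convenient bound for the small factor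
    have hCbound : C₀ * Real.exp (-(2*a*(n:ℝ))) ≤ C₀ * Real.exp (-(a*(n:ℝ))) :=
      mul_le_mul_of_nonneg_left hean hC₀.le
    rw [hφ n x, hψ n x]
    split_ifs with hxb
    · -- region x ≤ b
      calc |Real.sin (k n * x) - Real.sin (ν n * x)|
          ≤ |k n * x - ν n * x| := aux_sin_lip _ _
        _ = |k n - ν n| * |x| := by rw [← sub_mul, abs_mul]
        _ ≤ (C₀ * Real.exp (-(2*a*(n:ℝ)))) * 1 := by
            refine mul_le_mul hasymn ?_ (abs_nonneg _) (by positivity)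
            rw [abs_of_nonneg hx0]; linarith
        _ = C₀ * Real.exp (-(2*a*(n:ℝ))) := mul_one _
        _ ≤ D * Real.exp (-(a*(n:ℝ))) :=
            mul_le_mul hDC hean (Real.exp_pos _).le hD0.le
    · -- region b < x
      have hx' : b < x := not_le.1 hxb
      have ht0 : 0 ≤ x - b := by linarith
      have ht1 : x - b ≤ 1 := by linarith
      have hA0 : 0 ≤ k n * (1 - x) := mul_nonneg hkn.le (by linarith)
      have hAB : k n * (1 - x) ≤ k n * (1 - b) := by nlinarith
      have hB0 : 0 < k n * (1 - b) := mul_pos hkn (by linarith)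
      have hSB : 0 < Real.sinh (k n * (1 - b)) := Real.sinh_pos_iff.2 hB0
      have hSA0 : 0 ≤ Real.sinh (k n * (1 - x)) := Real.sinh_nonneg_iff.2 hA0
      have hSAB : Real.sinh (k n * (1 - x)) ≤ Real.sinh (k n * (1 - b)) :=
        Real.sinh_le_sinh.2 hAB
      have hR0 : 0 ≤ Real.sinh (k n * (1 - x)) / Real.sinh (k n * (1 - b)) :=
        div_nonneg hSA0 hSB.le
      have hR1 : Real.sinh (k n * (1 - x)) / Real.sinh (k n * (1 - b)) ≤ 1 :=
        (div_le_one hSB).2 hSAB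
      -- value of sin(ν n * b)
      have hsin_nu : Real.sin (ν n * b) = Real.sqrt 2 / 2 * (-1:ℝ)^n := by
        have harg : ν n * b = (n:ℝ) * Real.pi + Real.pi / 4 := by
          rw [hν n]; field_simp
        rw [harg, Real.sin_add, Real.sin_nat_mul_pi]
        have hc : Real.cos ((n:ℝ) * Real.pi) = (-1:ℝ)^n := by
          simpa using Real.cos_nat_mul_pi_sub 0 n
        rw [hc, Real.sin_pi_div_four]
        ring
      -- Term 1 : difference of amplitudes
      have hT1 : |Real.sin (k n * b) - Real.sqrt 2 / 2 * (-1:ℝ)^n|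
          ≤ C₀ * Real.exp (-(2*a*(n:ℝ))) := by
        rw [← hsin_nu]
        calc |Real.sin (k n * b) - Real.sin (ν n * b)|
            ≤ |k n * b - ν n * b| := aux_sin_lip _ _
          _ = |k n - ν n| * |b| := by rw [← sub_mul, abs_mul]
          _ ≤ (C₀ * Real.exp (-(2*a*(n:ℝ)))) * 1 := by
              refine mul_le_mul hasymn ?_ (abs_nonneg _) (by positivity)
              rw [abs_of_pos hb0]; linarith
          _ = _ := mul_one _
      -- Term 2 : sinh ratio vs exponential
      have hnum : Real.exp (k n * (1-x) - k n * (1-b)) * Real.sinh (k n * (1-b))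
            - Real.sinh (k n * (1-x))
          = (Real.exp (-(k n * (1-x))) - Real.exp (k n * (1-x) - 2*(k n * (1-b))))/2 := by
        rw [Real.sinh_eq, Real.sinh_eq]
        rw [show Real.exp (k n * (1-x) - 2*(k n * (1-b)))
            = Real.exp (k n * (1-x) - k n * (1-b)) * Real.exp (-(k n * (1-b))) from by
          rw [← Real.exp_add]; congr 1; ring]
        rw [show Real.exp (k n * (1-x))
            = Real.exp (k n * (1-x) - k n * (1-b)) * Real.exp (k n * (1-b)) from by
          rw [← Real.exp_add]; congr 1; ring]
        ring
      have hnum0 : 0 ≤ Real.exp (-(k n * (1-x))) - Real.exp (k n * (1-x) - 2*(k n * (1-b))) :=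
        sub_nonneg.2 (Real.exp_le_exp.2 (by linarith))
      have hnum1 : Real.exp (-(k n * (1-x))) - Real.exp (k n * (1-x) - 2*(k n * (1-b))) ≤ 1 := by
        have h1 : Real.exp (-(k n * (1-x))) ≤ 1 := Real.exp_le_one_iff.2 (by linarith)
        linarith [Real.exp_pos (k n * (1-x) - 2*(k n * (1-b)))]
      have hdiff_eq : Real.exp (-(k n * (x-b)))
            - Real.sinh (k n * (1-x)) / Real.sinh (k n * (1-b))
          = (Real.exp (-(k n * (1-x))) - Real.exp (k n * (1-x) - 2*(k n * (1-b))))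
              / (2 * Real.sinh (k n * (1-b))) := by
        rw [show -(k n * (x-b)) = k n * (1-x) - k n * (1-b) from by ring]
        rw [eq_div_iff (by positivity : (2:ℝ) * Real.sinh (k n * (1-b)) ≠ 0)]
        have hne : Real.sinh (k n * (1-b)) ≠ 0 := ne_of_gt hSB
        linear_combination 2 * hnum - 2 * (div_mul_cancel₀ (Real.sinh (k n * (1-x))) hne)
      have h2s : Real.exp (a*(n:ℝ)) * (1 - Real.exp (-(2*a)))
          ≤ 2 * Real.sinh (k n * (1-b)) := by
        have e1 : Real.exp (k n * (1-b)) * (1 - Real.exp (-(2*(k n * (1-b)))))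
            = 2 * Real.sinh (k n * (1-b)) := by
          rw [Real.sinh_eq]
          rw [show Real.exp (-(k n * (1-b)))
              = Real.exp (k n * (1-b)) * Real.exp (-(2*(k n * (1-b)))) from by
            rw [← Real.exp_add]; congr 1; ring]
          ring
        rw [← e1]
        refine mul_le_mul (Real.exp_le_exp.2 hk1) ?_ hd.le (Real.exp_pos _).le
        have : Real.exp (-(2*(k n * (1-b)))) ≤ Real.exp (-(2*a)) :=
          Real.exp_le_exp.2 (by linarith)
        linarith
      have hT2core : |Real.sinh (k n * (1-x)) / Real.sinh (k n * (1-b))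
            - Real.exp (-(k n * (x-b)))|
          ≤ Real.exp (-(a*(n:ℝ))) / (1 - Real.exp (-(2*a))) := by
        rw [abs_sub_comm, abs_of_nonneg (by rw [hdiff_eq]; positivity), hdiff_eq]
        rw [div_le_div_iff₀ (by positivity) hd]
        have he : Real.exp (-(a*(n:ℝ))) * Real.exp (a*(n:ℝ)) = 1 := by
          rw [← Real.exp_add]; simp
        have hm := mul_le_mul_of_nonneg_left h2s (Real.exp_pos (-(a*(n:ℝ)))).le
        nlinarith [hnum0, hnum1, hd, Real.exp_pos (-(a*(n:ℝ)))]
      -- Term 3 : exponential shift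
      have hT3core : |Real.exp (-(k n * (x-b))) - Real.exp (-(ν n * (x-b)))|
          ≤ C₀ * Real.exp (-(2*a*(n:ℝ))) := by
        calc |Real.exp (-(k n * (x-b))) - Real.exp (-(ν n * (x-b)))|
            ≤ |k n * (x-b) - ν n * (x-b)| :=
              aux_exp_lip (mul_nonneg hkn.le ht0) (mul_nonneg hνpos.le ht0)
          _ = |k n - ν n| * |x - b| := by rw [← sub_mul, abs_mul]
          _ ≤ (C₀ * Real.exp (-(2*a*(n:ℝ)))) * 1 := by
              refine mul_le_mul hasymn ?_ (abs_nonneg _) (by positivity)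
              rw [abs_of_nonneg ht0]; linarith
          _ = _ := mul_one _
      -- assemble
      have tri : ∀ p q r : ℝ, |p + (q + r)| ≤ |p| + |q| + |r| := by
        intro p q r
        calc |p + (q + r)| ≤ |p| + |q + r| := abs_add_le _ _
          _ ≤ |p| + (|q| + |r|) := by linarith [abs_add_le q r]
          _ = |p| + |q| + |r| := by ring
      have hsplit : Real.sin (k n * b) / Real.sinh (k n * (1-b)) * Real.sinh (k n * (1-x))
            - Real.sqrt 2 / 2 * (-1:ℝ)^n * Real.exp (-(ν n * (x-b)))
          = (Real.sin (k n * b) - Real.sqrt 2 / 2 * (-1:ℝ)^n)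
              * (Real.sinh (k n * (1-x)) / Real.sinh (k n * (1-b)))
            + (Real.sqrt 2 / 2 * (-1:ℝ)^n
                * (Real.sinh (k n * (1-x)) / Real.sinh (k n * (1-b))
                    - Real.exp (-(k n * (x-b))))
              + Real.sqrt 2 / 2 * (-1:ℝ)^n
                * (Real.exp (-(k n * (x-b))) - Real.exp (-(ν n * (x-b))))) := by
        ring
      rw [hsplit]
      refine (tri _ _ _).trans ?_
      have hP : |(Real.sin (k n * b) - Real.sqrt 2 / 2 * (-1:ℝ)^n)
            * (Real.sinh (k n * (1-x)) / Real.sinh (k n * (1-b)))|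
          ≤ C₀ * Real.exp (-(2*a*(n:ℝ))) := by
        rw [abs_mul, abs_of_nonneg hR0]
        calc _ ≤ (C₀ * Real.exp (-(2*a*(n:ℝ)))) * 1 :=
              mul_le_mul hT1 hR1 hR0 (by positivity)
          _ = _ := mul_one _
      have hQ : |Real.sqrt 2 / 2 * (-1:ℝ)^n
            * (Real.sinh (k n * (1-x)) / Real.sinh (k n * (1-b))
                - Real.exp (-(k n * (x-b))))|
          ≤ Real.exp (-(a*(n:ℝ))) / (1 - Real.exp (-(2*a))) := by
        rw [abs_mul]
        calc _ ≤ 1 * (Real.exp (-(a*(n:ℝ))) / (1 - Real.exp (-(2*a)))) :=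
              mul_le_mul (hsabs' n) hT2core (abs_nonneg _) zero_le_one
          _ = _ := one_mul _
      have hS : |Real.sqrt 2 / 2 * (-1:ℝ)^n
            * (Real.exp (-(k n * (x-b))) - Real.exp (-(ν n * (x-b))))|
          ≤ C₀ * Real.exp (-(2*a*(n:ℝ))) := by
        rw [abs_mul]
        calc _ ≤ 1 * (C₀ * Real.exp (-(2*a*(n:ℝ)))) :=
              mul_le_mul (hsabs' n) hT3core (abs_nonneg _) zero_le_one
          _ = _ := one_mul _
      have hfin : C₀ * Real.exp (-(a*(n:ℝ))) + Real.exp (-(a*(n:ℝ))) / (1 - Real.exp (-(2*a)))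
          + C₀ * Real.exp (-(a*(n:ℝ))) = D * Real.exp (-(a*(n:ℝ))) := by
        rw [hD_def]; field_simp; ring
      linarith [hP, hQ, hS, hCbound]
  -- final constant
  refine ⟨max (2 * Real.exp (a*(N:ℝ))) D, lt_of_lt_of_le (by positivity) (le_max_left _ _), ?_⟩
  intro n hn x hx
  obtain ⟨hx0, hx1⟩ := hx
  have hE : Real.pi * (1 - b) * (n:ℝ) / b = a*(n:ℝ) := by rw [ha_def]; ring
  rw [hE]
  rcases le_or_gt N n with hNn | hNn
  · exact le_trans (hkey n hNn hn x hx0 hx1)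
      (mul_le_mul_of_nonneg_right (le_max_right _ _) (Real.exp_pos _).le)
  · have h2 := hbnd2 n hn x hx0 hx1
    have hcast : (n:ℝ) ≤ (N:ℝ) := by exact_mod_cast hNn.le
    have h3 : (2:ℝ) ≤ 2 * Real.exp (a*(N:ℝ)) * Real.exp (-(a*(n:ℝ))) := by
      rw [mul_assoc, ← Real.exp_add]
      have h4 : (1:ℝ) ≤ Real.exp (a*(N:ℝ) + -(a*(n:ℝ))) :=
        Real.one_le_exp (by nlinarith)
      nlinarith
    calc |φ n x - ψ n x| ≤ 2 := h2
      _ ≤ 2 * Real.exp (a*(N:ℝ)) * Real.exp (-(a*(n:ℝ))) := h3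
      _ ≤ max (2 * Real.exp (a*(N:ℝ))) D * Real.exp (-(a*(n:ℝ))) :=
          mul_le_mul_of_nonneg_right (le_max_left _ _) (Real.exp_pos _).le
end

section
/- Let b ∈ (0,1) and ν_n = (π/b)(n + 1/4). Let (k_n)_{n≥1} be positive reals with sin(k_n b) cosh(k_n(1−b)) = cos(k_n b) sinh(k_n(1−b)) and |k_n − ν_n| ≤ C₀ e^{−2π(1−b)n/b} for some C₀ > 0 and all n ≥ 1, and define φ_n(x) = sin(k_n x) for x ∈ [0,b] and φ_n(x) = ( sin(k_n b)/sinh(k_n(1−b)) ) sinh(k_n(1−x)) for x ∈ [b,1]. Then there exists C > 0 such that for all n ≥ 1, | ( ∫_0^1 |φ_n(x)|² dx )^{-1} − 2/b | ≤ C/n. -/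
open Real intervalIntegral

lemma aux_sin_sq (κ c : ℝ) (hκ : κ ≠ 0) :
    ∫ x in (0:ℝ)..c, Real.sin (κ*x)^2
      = c/2 - Real.sin (κ*c) * Real.cos (κ*c) / (2*κ) := by
  rw [intervalIntegral.integral_comp_mul_left (fun x => Real.sin x ^ 2) hκ]
  rw [integral_sin_sq]
  simp
  field_simp
  ring

lemma aux_exp_int (κ c : ℝ) (hκ : 0 < κ) :
    ∫ x in c..(1:ℝ), Real.exp (2*κ*(1-x))
      = (Real.exp (2*κ*(1-c)) - 1) / (2*κ) := by
  have h : ∀ x ∈ Set.uIcc c (1:ℝ), HasDerivAt (fun y => -Real.exp (2*κ*(1-y)) / (2*κ))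
      (Real.exp (2*κ*(1-x))) x := by
    intro x _
    have h1 : HasDerivAt (fun y : ℝ => 2*κ*(1-y)) (-(2*κ)) x := by
      simpa using ((hasDerivAt_id x).const_sub 1).const_mul (2*κ)
    have h2 := (Real.hasDerivAt_exp (2*κ*(1-x))).comp x h1
    have h3 := (h2.neg).div_const (2*κ)
    refine h3.congr_deriv ?_
    rw [div_eq_iff (by positivity)]; ring
  rw [intervalIntegral.integral_eq_sub_of_hasDerivAt h]
  · simp; ring
  · exact (Real.continuous_exp.comp (by continuity)).intervalIntegrable c 1

lemma int_phi (b K : ℝ) (hb0 : 0 < b) (hb1 : b < 1) (hK : 0 < K) (f : ℝ → ℝ)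
    (hf : ∀ x, f x = if x ≤ b then Real.sin (K*x)
      else (Real.sin (K*b)/Real.sinh (K*(1-b))) * Real.sinh (K*(1-x))) :
    ∫ x in (0:ℝ)..1, f x ^ 2
      = (b/2 - Real.sin (K*b)*Real.cos (K*b)/(2*K))
        + (Real.sin (K*b)/Real.sinh (K*(1-b)))^2
            * ∫ x in b..(1:ℝ), Real.sinh (K*(1-x))^2 := by
  have hs : 0 < Real.sinh (K*(1-b)) := Real.sinh_pos_iff.2 (by nlinarith)
  have hjoin : Real.sin (K*b)
      = (Real.sin (K*b)/Real.sinh (K*(1-b))) * Real.sinh (K*(1-b)) := by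
    field_simp
  have hfc : Continuous f := by
    have : f = fun x => if x ≤ b then Real.sin (K*x)
        else (Real.sin (K*b)/Real.sinh (K*(1-b))) * Real.sinh (K*(1-x)) := funext hf
    rw [this]
    exact Continuous.if_le
      (Real.continuous_sin.comp (continuous_const.mul continuous_id))
      (continuous_const.mul (Real.continuous_sinh.comp
        (continuous_const.mul (continuous_const.sub continuous_id))))
      continuous_id continuous_const (fun x hx => by subst hx; exact hjoin)
  have hint : ∀ u v : ℝ, IntervalIntegrable (fun x => f x ^ 2) MeasureTheory.volume u v :=
    fun u v => ((hfc.pow 2).intervalIntegrable u v)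
  have hsplit : ∫ x in (0:ℝ)..1, f x ^ 2
      = (∫ x in (0:ℝ)..b, f x ^ 2) + ∫ x in b..(1:ℝ), f x ^ 2 :=
    (intervalIntegral.integral_add_adjacent_intervals (hint 0 b) (hint b 1)).symm
  have h1 : ∫ x in (0:ℝ)..b, f x ^ 2 = ∫ x in (0:ℝ)..b, Real.sin (K*x) ^ 2 := by
    apply intervalIntegral.integral_congr
    intro x hx
    rw [Set.uIcc_of_le hb0.le] at hx
    simp only [hf x, if_pos hx.2]
  have h2 : ∫ x in b..(1:ℝ), f x ^ 2
      = ∫ x in b..(1:ℝ), ((Real.sin (K*b)/Real.sinh (K*(1-b))) * Real.sinh (K*(1-x))) ^ 2 := by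
    apply intervalIntegral.integral_congr
    intro x hx
    rw [Set.uIcc_of_le hb1.le] at hx
    simp only
    rw [hf x]
    by_cases hxb : x ≤ b
    · have : x = b := le_antisymm hxb hx.1
      subst this
      rw [if_pos le_rfl, ← hjoin]
    · rw [if_neg hxb]
  have h3 : ∫ x in b..(1:ℝ), ((Real.sin (K*b)/Real.sinh (K*(1-b))) * Real.sinh (K*(1-x))) ^ 2
      = (Real.sin (K*b)/Real.sinh (K*(1-b)))^2 * ∫ x in b..(1:ℝ), Real.sinh (K*(1-x))^2 := by
    simp only [mul_pow]
    exact intervalIntegral.integral_const_mul _ _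
  rw [hsplit, h1, h2, h3, aux_sin_sq K b (ne_of_gt hK)]

lemma main_est (b K : ℝ) (hb0 : 0 < b) (hb1 : b < 1) (hK : 0 < K) (hs1 : 1 ≤ K*(1-b)) :
    |((b/2 - Real.sin (K*b)*Real.cos (K*b)/(2*K))
        + (Real.sin (K*b)/Real.sinh (K*(1-b)))^2
            * ∫ x in b..(1:ℝ), Real.sinh (K*(1-x))^2) - b/2|
      ≤ 5/(2*K) := by
  have hs0 : 0 < K*(1-b) := lt_of_lt_of_le one_pos hs1
  have hsinh : 0 < Real.sinh (K*(1-b)) := Real.sinh_pos_iff.2 hs0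
  have hE : 0 < Real.exp (K*(1-b)) := Real.exp_pos _
  -- lower bound on sinh
  have hexp2 : 2 ≤ Real.exp (K*(1-b)) := by
    have := Real.add_one_le_exp (K*(1-b)); linarith
  have hprodE : Real.exp (-(K*(1-b))) * Real.exp (K*(1-b)) = 1 := by
    rw [← Real.exp_add]; simp
  have hsinh_lb : Real.exp (K*(1-b)) / 4 ≤ Real.sinh (K*(1-b)) := by
    rw [Real.sinh_eq]
    nlinarith [Real.exp_pos (-(K*(1-b)))]
  -- bound on (sin/sinh)^2
  have hprod2 : Real.exp (-(2*K*(1-b))) * (Real.exp (K*(1-b)) * Real.exp (K*(1-b))) = 1 := by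
    rw [← Real.exp_add, ← Real.exp_add,
      show -(2*K*(1-b)) + (K*(1-b) + K*(1-b)) = 0 by ring, Real.exp_zero]
  have hEm : 0 < Real.exp (-(2*K*(1-b))) := Real.exp_pos _
  have hc2 : (Real.sin (K*b)/Real.sinh (K*(1-b)))^2 ≤ 16 * Real.exp (-(2*K*(1-b))) := by
    rw [div_pow, div_le_iff₀ (by positivity)]
    have hsq : (Real.exp (K*(1-b))/4)^2 ≤ Real.sinh (K*(1-b))^2 :=
      pow_le_pow_left₀ (by positivity) hsinh_lb 2
    nlinarith [Real.sin_sq_le_one (K*b)]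
  -- bound on the integral
  have hInt_nonneg : (0:ℝ) ≤ ∫ x in b..(1:ℝ), Real.sinh (K*(1-x))^2 :=
    intervalIntegral.integral_nonneg hb1.le (fun x _ => sq_nonneg _)
  have hInt_le : (∫ x in b..(1:ℝ), Real.sinh (K*(1-x))^2)
      ≤ Real.exp (K*(1-b)) * Real.exp (K*(1-b)) / (8*K) := by
    have hmono : (∫ x in b..(1:ℝ), Real.sinh (K*(1-x))^2)
        ≤ ∫ x in b..(1:ℝ), Real.exp (2*K*(1-x)) / 4 := by
      apply intervalIntegral.integral_mono_on hb1.le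
      · exact ((Real.continuous_sinh.comp (by continuity)).pow 2).intervalIntegrable b 1
      · exact ((Real.continuous_exp.comp (by continuity)).div_const 4).intervalIntegrable b 1
      · intro x hx
        have ht : 0 ≤ K*(1-x) := by nlinarith [hx.2]
        have h1 : Real.sinh (K*(1-x)) ≤ Real.exp (K*(1-x))/2 := by
          rw [Real.sinh_eq]
          nlinarith [Real.exp_pos (-(K*(1-x)))]
        have h0 : 0 ≤ Real.sinh (K*(1-x)) := Real.sinh_nonneg_iff.2 ht
        have hee : Real.exp (2*K*(1-x)) = Real.exp (K*(1-x)) * Real.exp (K*(1-x)) := by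
          rw [← Real.exp_add]; ring_nf
        nlinarith
    have heq : (∫ x in b..(1:ℝ), Real.exp (2*K*(1-x)) / 4)
        = (Real.exp (2*K*(1-b)) - 1) / (2*K) / 4 := by
      rw [intervalIntegral.integral_div, aux_exp_int K b hK]
    have hee : Real.exp (2*K*(1-b)) = Real.exp (K*(1-b)) * Real.exp (K*(1-b)) := by
      rw [← Real.exp_add]; ring_nf
    rw [heq, hee] at hmono
    refine le_trans hmono ?_
    rw [div_div, show (2*K*4:ℝ) = 8*K by ring]
    gcongr
    linarith
  -- combine
  set T := (Real.sin (K*b)/Real.sinh (K*(1-b)))^2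
      * ∫ x in b..(1:ℝ), Real.sinh (K*(1-x))^2 with hTdef
  have hT0 : 0 ≤ T := mul_nonneg (sq_nonneg _) hInt_nonneg
  have hT : T ≤ 2/K := by
    have h1 : T ≤ (16 * Real.exp (-(2*K*(1-b))))
        * (Real.exp (K*(1-b)) * Real.exp (K*(1-b)) / (8*K)) :=
      mul_le_mul hc2 hInt_le hInt_nonneg (by positivity)
    have h2 : (16 * Real.exp (-(2*K*(1-b))))
        * (Real.exp (K*(1-b)) * Real.exp (K*(1-b)) / (8*K))
        = (Real.exp (-(2*K*(1-b))) * (Real.exp (K*(1-b)) * Real.exp (K*(1-b)))) * (2/K) := by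
      ring
    rw [h2, hprod2, one_mul] at h1
    exact h1
  have hsc1 : Real.sin (K*b) * Real.cos (K*b) ≤ 1 := by
    nlinarith [Real.neg_one_le_sin (K*b), Real.sin_le_one (K*b),
      Real.neg_one_le_cos (K*b), Real.cos_le_one (K*b)]
  have hsc2 : -1 ≤ Real.sin (K*b) * Real.cos (K*b) := by
    nlinarith [Real.neg_one_le_sin (K*b), Real.sin_le_one (K*b),
      Real.neg_one_le_cos (K*b), Real.cos_le_one (K*b)]
  have h2K : (0:ℝ) < 2*K := by linarith
  have hd1 : Real.sin (K*b) * Real.cos (K*b) / (2*K) ≤ 1/(2*K) :=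
    (div_le_div_iff_of_pos_right h2K).2 hsc1
  have hd2 : (-1:ℝ)/(2*K) ≤ Real.sin (K*b) * Real.cos (K*b) / (2*K) :=
    (div_le_div_iff_of_pos_right h2K).2 hsc2
  have h5 : 1/(2*K) + 2/K = 5/(2*K) := by field_simp; ring
  have h15 : (-1:ℝ)/(2*K) = -(1/(2*K)) := by ring
  rw [abs_le]
  constructor
  · have : (0:ℝ) < 1/(2*K) := by positivity
    linarith
  · linarith

set_option maxHeartbeats 1000000 in
theorem stmt_14 (b : ℝ) (hb : b ∈ Set.Ioo (0:ℝ) 1)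
    (ν : ℕ → ℝ) (hν : ∀ n : ℕ, ν n = (Real.pi / b) * ((n : ℝ) + 1/4))
    (k : ℕ → ℝ) (hkpos : ∀ n : ℕ, 1 ≤ n → 0 < k n)
    (hchar : ∀ n : ℕ, 1 ≤ n →
      Real.sin (k n * b) * Real.cosh (k n * (1 - b)) =
        Real.cos (k n * b) * Real.sinh (k n * (1 - b)))
    (C₀ : ℝ) (hC₀ : 0 < C₀)
    (hasym : ∀ n : ℕ, 1 ≤ n →
      |k n - ν n| ≤ C₀ * Real.exp (-(2 * Real.pi * (1 - b) * n / b)))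
    (φ : ℕ → ℝ → ℝ)
    (hφ : ∀ n : ℕ, ∀ x : ℝ, φ n x =
      if x ≤ b then Real.sin (k n * x)
      else (Real.sin (k n * b) / Real.sinh (k n * (1 - b))) * Real.sinh (k n * (1 - x))) :
    ∃ C : ℝ, 0 < C ∧ ∀ n : ℕ, 1 ≤ n →
      |(∫ x in (0:ℝ)..1, (φ n x) ^ 2)⁻¹ - 2 / b| ≤ C / n := by
  obtain ⟨hb0, hb1⟩ := hb
  set N : ℕ := ⌈(2*C₀/3 : ℝ)⌉₊ + ⌈(2/(3*(1-b)) : ℝ)⌉₊ + ⌈(8/b : ℝ)⌉₊ + 1 with hNdef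
  have hmain : ∀ n : ℕ, N ≤ n →
      |(∫ x in (0:ℝ)..1, (φ n x) ^ 2)⁻¹ - 2 / b| ≤ (16/b^2) / n := by
    intro n hn
    have hn1 : 1 ≤ n := le_trans (by omega) hn
    have hnR : (1:ℝ) ≤ (n:ℝ) := by exact_mod_cast hn1
    have hnR0 : (0:ℝ) < (n:ℝ) := by linarith
    have hK := hkpos n hn1
    have hceil1 : (2*C₀/3 : ℝ) ≤ n :=
      le_trans (Nat.le_ceil _) (by exact_mod_cast (by omega : ⌈(2*C₀/3 : ℝ)⌉₊ ≤ n))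
    have hceil2 : (2/(3*(1-b)) : ℝ) ≤ n :=
      le_trans (Nat.le_ceil _) (by exact_mod_cast (by omega : ⌈(2/(3*(1-b)) : ℝ)⌉₊ ≤ n))
    have hceil3 : (8/b : ℝ) ≤ n :=
      le_trans (Nat.le_ceil _) (by exact_mod_cast (by omega : ⌈(8/b : ℝ)⌉₊ ≤ n))
    have hkb : 3*(n:ℝ)/2 ≤ k n := by
      have habs := abs_le.mp (hasym n hn1)
      have hexp_le : Real.exp (-(2 * Real.pi * (1 - b) * n / b)) ≤ 1 := by
        rw [Real.exp_le_one_iff]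
        have h1 : 0 ≤ 2 * Real.pi * (1 - b) * n / b := by
          apply div_nonneg _ hb0.le
          exact mul_nonneg (mul_nonneg (by nlinarith [Real.pi_pos]) (by linarith)) hnR0.le
        linarith
      have hνge : 3*(n:ℝ) ≤ ν n := by
        rw [hν n]
        have hπ := Real.pi_gt_three
        have h1 : Real.pi / b * ((n:ℝ) + 1/4) = Real.pi * ((n:ℝ) + 1/4) / b := by ring
        rw [h1]
        have h2 : Real.pi * ((n:ℝ) + 1/4) ≤ Real.pi * ((n:ℝ) + 1/4) / b :=
          le_div_self (by positivity) hb0 hb1.le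
        nlinarith
      have hC0n : C₀ * Real.exp (-(2 * Real.pi * (1 - b) * n / b)) ≤ C₀ :=
        mul_le_of_le_one_right hC₀.le hexp_le
      nlinarith [habs.1]
    have hs1 : 1 ≤ k n * (1-b) := by
      rw [div_le_iff₀ (by nlinarith)] at hceil2
      nlinarith
    have hIdent := int_phi b (k n) hb0 hb1 hK (φ n) (fun x => by rw [hφ n x])
    have hEst := main_est b (k n) hb0 hb1 hK hs1
    rw [← hIdent] at hEst
    set I := ∫ x in (0:ℝ)..1, (φ n x)^2 with hIdef
    have h2k : 5/(2*k n) ≤ 2/(n:ℝ) := by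
      rw [div_le_div_iff₀ (by positivity) hnR0]
      nlinarith
    have hIb : |I - b/2| ≤ 2/(n:ℝ) := le_trans hEst h2k
    have h2nb : 2/(n:ℝ) ≤ b/4 := by
      rw [div_le_iff₀ hb0] at hceil3
      rw [div_le_div_iff₀ hnR0 (by norm_num)]
      nlinarith
    have hIlb : b/4 ≤ I := by
      have := abs_le.mp hIb
      linarith
    have hIpos : 0 < I := by linarith
    have hbI : 0 < b * I := mul_pos hb0 hIpos
    have key : I⁻¹ - 2/b = (b/2 - I) * (2/(b*I)) := by
      field_simp
    rw [key, abs_mul, abs_of_nonneg (div_nonneg (by norm_num) hbI.le : (0:ℝ) ≤ 2/(b*I))]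
    have habs2 : |b/2 - I| ≤ 2/(n:ℝ) := by rw [abs_sub_comm]; exact hIb
    have hfac : 2/(b*I) ≤ 8/b^2 := by
      rw [div_le_div_iff₀ hbI (by positivity)]
      nlinarith
    calc |b/2 - I| * (2/(b*I)) ≤ (2/(n:ℝ)) * (8/b^2) :=
          mul_le_mul habs2 hfac (div_nonneg (by norm_num) hbI.le)
            (div_nonneg (by norm_num) hnR0.le)
      _ = (16/b^2) / n := by ring
  have hNpos : 1 ≤ N := by omega
  have hne : (Finset.Icc 1 N).Nonempty := ⟨1, Finset.mem_Icc.2 ⟨le_rfl, hNpos⟩⟩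
  set C₁ := (Finset.Icc 1 N).sup' hne
    (fun m => (m:ℝ) * |(∫ x in (0:ℝ)..1, (φ m x) ^ 2)⁻¹ - 2/b|) with hC₁def
  have hC₁0 : 0 ≤ C₁ := by
    refine le_trans ?_ (Finset.le_sup' _ (Finset.mem_Icc.2 ⟨le_rfl, hNpos⟩))
    positivity
  have hCb : (0:ℝ) < 16/b^2 := by positivity
  refine ⟨C₁ + 16/b^2, by linarith, ?_⟩
  intro n hn1
  have hnR0 : (0:ℝ) < (n:ℝ) := by exact_mod_cast hn1
  by_cases hcase : n ≤ N
  · have hmem : n ∈ Finset.Icc 1 N := Finset.mem_Icc.2 ⟨hn1, hcase⟩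
    have hle := Finset.le_sup'
      (fun m : ℕ => (m:ℝ) * |(∫ x in (0:ℝ)..1, (φ m x) ^ 2)⁻¹ - 2/b|) hmem
    rw [le_div_iff₀ hnR0]
    calc |(∫ x in (0:ℝ)..1, (φ n x) ^ 2)⁻¹ - 2/b| * n
        = (n:ℝ) * |(∫ x in (0:ℝ)..1, (φ n x) ^ 2)⁻¹ - 2/b| := by ring
      _ ≤ C₁ := hle
      _ ≤ C₁ + 16/b^2 := by linarith
  · refine le_trans (hmain n (by omega)) ?_
    gcongr
    linarith
end

section
/- Let f : [0,1] → ℂ be integrable, let c ∈ ℂ and n ∈ ℤ. Define G : [0,2] → ℂ by G(y) = e^{−iπy/4}( c + i f(y) ) for y ∈ [0,1] and G(y) = e^{−iπy/4}( i c + f(2−y) ) for y ∈ (1,2]. Then 2 ∫_0^1 [ f(y) sin( π(n + 1/4) y ) + c cos( π(n + 1/4) y ) ] dy = ∫_0^2 G(y) e^{−iπ n y} dy. -/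
open MeasureTheory intervalIntegral Set Complex

theorem stmt_16 (f : ℝ → ℂ) (hf : IntervalIntegrable f MeasureTheory.volume 0 1)
    (c : ℂ) (n : ℤ)
    (G : ℝ → ℂ)
    (hG1 : ∀ y ∈ Set.Icc (0:ℝ) 1,
      G y = Complex.exp (-(Complex.I * Real.pi * y / 4)) * (c + Complex.I * f y))
    (hG2 : ∀ y ∈ Set.Ioc (1:ℝ) 2,
      G y = Complex.exp (-(Complex.I * Real.pi * y / 4)) * (Complex.I * c + f (2 - y))) :
    2 * ∫ y in (0:ℝ)..1,
        (f y * (Real.sin (Real.pi * ((n : ℝ) + 1/4) * y) : ℝ)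
          + c * (Real.cos (Real.pi * ((n : ℝ) + 1/4) * y) : ℝ))
      = ∫ y in (0:ℝ)..2, G y * Complex.exp (-(Complex.I * Real.pi * n * y)) := by
  set e : ℝ → ℂ := fun y => Complex.exp (-(Complex.I * Real.pi * n * y)) with he
  set g1 : ℝ → ℂ := fun y =>
    Complex.exp (-(Complex.I * Real.pi * y / 4)) * (c + Complex.I * f y) * e y with hg1
  set g2 : ℝ → ℂ := fun y =>
    Complex.exp (-(Complex.I * Real.pi * (2 - y) / 4)) * (Complex.I * c + f y) * e (2 - y)
    with hg2
  -- integrability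
  have hfc : IntervalIntegrable (fun y => c + Complex.I * f y) volume 0 1 :=
    (intervalIntegrable_const (c := c)).add (hf.const_mul _)
  have hfc2 : IntervalIntegrable (fun y => Complex.I * c + f y) volume 0 1 :=
    (intervalIntegrable_const (c := Complex.I * c)).add hf
  have hcont1 : ContinuousOn (fun y : ℝ =>
      Complex.exp (-(Complex.I * Real.pi * y / 4)) * e y) (Set.uIcc 0 1) := by
    apply Continuous.continuousOn; fun_prop
  have hcont2 : ContinuousOn (fun y : ℝ =>
      Complex.exp (-(Complex.I * Real.pi * (2 - y) / 4)) * e (2 - y)) (Set.uIcc 0 1) := by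
    apply Continuous.continuousOn; fun_prop
  have hI1 : IntervalIntegrable g1 volume 0 1 := by
    have := hfc.continuousOn_mul hcont1
    apply this.congr
    intro y _
    simp [hg1]; ring
  have hI2 : IntervalIntegrable g2 volume 0 1 := by
    have := hfc2.continuousOn_mul hcont2
    apply this.congr
    intro y _
    simp [hg2]; ring
  have hI2' : IntervalIntegrable (fun y => g2 (2 - y)) volume 1 2 := by
    have := (hI2.comp_sub_left 2).symm
    norm_num at this
    exact this
  -- G*e agrees with g1 on [0,1] and with g2 (2 - ·) on (1,2]
  have heq1 : ∀ y ∈ Set.Icc (0:ℝ) 1, G y * e y = g1 y := fun y hy => by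
    simp only [hg1, hG1 y hy]
  have heq2 : ∀ y ∈ Set.Ioc (1:ℝ) 2, G y * e y = g2 (2 - y) := fun y hy => by
    simp only [hg2, hG2 y hy]
    norm_num
  have hJ1 : IntervalIntegrable (fun y => G y * e y) volume 0 1 := by
    apply hI1.congr
    rw [Set.uIoc_of_le (by norm_num : (0:ℝ) ≤ 1)]
    intro y hy
    exact (heq1 y (Set.Ioc_subset_Icc_self hy)).symm
  have hJ2 : IntervalIntegrable (fun y => G y * e y) volume 1 2 := by
    apply hI2'.congr
    rw [Set.uIoc_of_le (by norm_num : (1:ℝ) ≤ 2)]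
    intro y hy
    exact (heq2 y hy).symm
  -- split the integral
  have hsplit : (∫ y in (0:ℝ)..2, G y * e y)
      = (∫ y in (0:ℝ)..1, G y * e y) + ∫ y in (1:ℝ)..2, G y * e y :=
    (integral_add_adjacent_intervals hJ1 hJ2).symm
  have h1 : (∫ y in (0:ℝ)..1, G y * e y) = ∫ y in (0:ℝ)..1, g1 y :=
    integral_congr fun y hy =>
      heq1 y (by rwa [Set.uIcc_of_le (by norm_num : (0:ℝ) ≤ 1)] at hy)
  have h2 : (∫ y in (1:ℝ)..2, G y * e y) = ∫ y in (0:ℝ)..1, g2 y := by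
    have : (∫ y in (1:ℝ)..2, G y * e y) = ∫ y in (1:ℝ)..2, g2 (2 - y) := by
      apply intervalIntegral.integral_congr_ae
      filter_upwards with y hy
      exact heq2 y (by rwa [Set.uIoc_of_le (by norm_num : (1:ℝ) ≤ 2)] at hy)
    rw [this, intervalIntegral.integral_comp_sub_left g2 2]
    norm_num
  have hX : IntervalIntegrable (fun y => f y * (Real.sin (Real.pi * ((n : ℝ) + 1/4) * y) : ℝ)
      + c * (Real.cos (Real.pi * ((n : ℝ) + 1/4) * y) : ℝ)) volume 0 1 := by
    apply IntervalIntegrable.add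
    · exact hf.mul_continuousOn (Continuous.continuousOn
        (Complex.continuous_ofReal.comp (Real.continuous_sin.comp (by continuity))))
    · exact (intervalIntegrable_const (c := c)).mul_continuousOn (Continuous.continuousOn
        (Complex.continuous_ofReal.comp (Real.continuous_cos.comp (by continuity))))
  rw [hsplit, h1, h2, ← intervalIntegral.integral_add hI1 hI2, two_mul,
    ← intervalIntegral.integral_add hX hX]
  · apply integral_congr
    intro y _
    simp only [hg1, hg2, he]
    rw [show ((2 - y : ℝ):ℂ) = 2 - (y:ℂ) from by push_cast; ring]
    set θ : ℝ := Real.pi * ((n:ℝ) + 1/4) * y with hθ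
    have key1 : Complex.exp (-(Complex.I * Real.pi * y / 4)) *
        Complex.exp (-(Complex.I * Real.pi * n * y))
        = Complex.cos θ - Complex.sin θ * Complex.I := by
      rw [← Complex.exp_add,
        show -(Complex.I * (Real.pi:ℂ) * y / 4) + -(Complex.I * Real.pi * n * y)
          = (-(θ:ℂ)) * Complex.I from by rw [hθ]; push_cast; ring,
        Complex.exp_mul_I, Complex.cos_neg, Complex.sin_neg]
      ring
    have key2 : Complex.exp (-(Complex.I * Real.pi * (2 - y) / 4)) *
        Complex.exp (-(Complex.I * Real.pi * n * (2 - y)))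
        = -Complex.I * (Complex.cos θ + Complex.sin θ * Complex.I) := by
      rw [← Complex.exp_add,
        show -(Complex.I * (Real.pi:ℂ) * (2 - (y:ℂ)) / 4) + -(Complex.I * Real.pi * n * (2 - y))
          = (θ:ℂ) * Complex.I + (((-(Real.pi/2) : ℝ) : ℂ) * Complex.I
              + ((-n : ℤ) : ℂ) * (2 * (Real.pi:ℂ) * Complex.I)) from by rw [hθ]; push_cast; ring,
        Complex.exp_add, Complex.exp_add, Complex.exp_int_mul_two_pi_mul_I,
        Complex.exp_mul_I, Complex.exp_mul_I]
      rw [← Complex.ofReal_cos, ← Complex.ofReal_sin]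
      norm_num
      ring
    rw [mul_right_comm _ _ (Complex.exp (-(Complex.I * Real.pi * (n:ℂ) * y))), key1,
      mul_right_comm _ _ (Complex.exp (-(Complex.I * Real.pi * (n:ℂ) * (2 - y)))), key2,
      ← Complex.ofReal_cos, ← Complex.ofReal_sin]
    linear_combination (2 * f y * (Real.sin θ : ℂ) + c * (Real.cos θ : ℂ) + c * (Real.sin θ : ℂ) * Complex.I) * Complex.I_sq
end

section
/- Let l > 0 and 0 < a < b < l, and let u = 1_{[a,b]} be the indicator function of [a,b], with Fourier coefficients û(n) = (1/l) ∫_0^l u(y) e^{−2πi n y / l} dy. Then for every x ∈ ℝ such that (x − a)/l ∉ ℤ and (x − b)/l ∉ ℤ, the series i Σ_{n=1}^∞ [ û(−n) e^{−2πi n x / l} − û(n) e^{2πi n x / l} ] converges and equals (1/π) · log | sin( π(x − a)/l ) / sin( π(x − b)/l ) |. -/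
open Filter Finset Complex Topology MeasureTheory

section Aux

lemma re_lt_one_of_norm_one {z : ℂ} (hz : ‖z‖ = 1) (hz1 : z ≠ 1) : z.re < 1 := by
  rcases lt_or_eq_of_le (Complex.re_le_norm z) with h | h
  · simpa [hz] using h
  · exfalso
    apply hz1
    have habs : ‖z‖ = 1 := hz
    have hre : z.re = 1 := by rw [h, habs]
    have hsq := Complex.sq_norm z
    rw [habs, Complex.normSq_apply, hre] at hsq
    have him : z.im = 0 := by nlinarith
    apply Complex.ext <;> simp [hre, him]

lemma boundary_log_series {z : ℂ} (hz : ‖z‖ = 1) (hz1 : z ≠ 1) :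
    Tendsto (fun N : ℕ => ∑ n ∈ Finset.range N, z ^ n / n) atTop (𝓝 (-Complex.log (1 - z))) := by
  have h1z : (1:ℂ) - z ≠ 0 := sub_ne_zero.mpr (Ne.symm hz1)
  have hz1' : z - 1 ≠ 0 := sub_ne_zero.mpr hz1
  have key : ∀ N : ℕ, ∑ i ∈ Finset.range N, ((1:ℝ)/(i+1)) • z ^ (i+1)
      = ∑ n ∈ Finset.range (N+1), z ^ n / n := by
    intro N
    rw [Finset.sum_range_succ']
    simp [div_eq_mul_inv, mul_comm]
  have hcs : CauchySeq (fun N : ℕ => ∑ n ∈ Finset.range N, z ^ n / n) := by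
    rw [← cauchySeq_shift 1]
    simp only [← key]
    apply Antitone.cauchySeq_series_mul_of_tendsto_zero_of_bounded
        (b := 2 / ‖(1:ℂ) - z‖)
    · intro m n hmn
      apply one_div_le_one_div_of_le (by positivity)
      have : (m:ℝ) ≤ n := Nat.cast_le.mpr hmn
      linarith
    · exact tendsto_one_div_add_atTop_nhds_zero_nat
    · intro n
      have e : ∑ i ∈ Finset.range n, z ^ (i+1) = z * ((z ^ n - 1) / (z - 1)) := by
        rw [← geom_sum_eq hz1, Finset.mul_sum]
        exact Finset.sum_congr rfl fun i _ => pow_succ' z i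
      rw [e, norm_mul, norm_div, hz, one_mul]
      rw [show ‖z - 1‖ = ‖(1:ℂ) - z‖ from norm_sub_rev _ _]
      have h2 : ‖z ^ n - 1‖ ≤ 2 := by
        calc ‖z ^ n - 1‖ ≤ ‖z ^ n‖ + ‖(1:ℂ)‖ := norm_sub_le _ _
        _ ≤ 2 := by simp [norm_pow, hz]; norm_num
      gcongr
  obtain ⟨L, hL⟩ := cauchySeq_tendsto_of_complete hcs
  have habel := tendsto_tsum_powerSeries_nhdsWithin_stolzSet (f := fun n => z ^ n / n) hL (M := 2)
  have hIoo : Set.Ioo (0:ℝ) 1 ∈ 𝓝[<] (1:ℝ) := by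
    apply mem_nhdsWithin.mpr
    exact ⟨Set.Ioo 0 2, isOpen_Ioo, by norm_num, by rintro t ⟨⟨h0, _⟩, h1⟩; exact ⟨h0, h1⟩⟩
  have hreal : Tendsto (fun t : ℝ => (t:ℂ)) (𝓝[<] (1:ℝ)) (𝓝[stolzSet 2] (1:ℂ)) := by
    apply tendsto_nhdsWithin_of_tendsto_nhds_of_eventually_within
    · exact (Complex.continuous_ofReal.tendsto' 1 1 (by norm_num)).mono_left nhdsWithin_le_nhds
    · filter_upwards [hIoo] with t ht
      constructor
      · simpa [Complex.norm_real, Real.norm_eq_abs, abs_of_pos ht.1] using ht.2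
      · rw [show (1:ℂ) - t = ((1 - t : ℝ) : ℂ) by push_cast; ring]
        simp only [Complex.norm_real, Real.norm_eq_abs, abs_of_pos ht.1,
          abs_of_pos (by linarith [ht.2] : (0:ℝ) < 1 - t)]
        nlinarith [ht.1, ht.2]
  have hcomp : Tendsto (fun t : ℝ => -Complex.log (1 - t * z)) (𝓝[<] (1:ℝ)) (𝓝 L) := by
    refine Tendsto.congr' ?_ ((habel.comp hreal))
    filter_upwards [hIoo] with t ht
    have hnorm : ‖(t:ℂ) * z‖ < 1 := by
      rw [norm_mul, hz, mul_one, Complex.norm_real, Real.norm_eq_abs, abs_of_pos ht.1]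
      exact ht.2
    have := (hasSum_taylorSeries_neg_log hnorm).tsum_eq
    rw [Function.comp_apply, ← this]
    apply tsum_congr
    intro n
    rw [mul_pow]
    ring
  have hslit : (1 - z) ∈ Complex.slitPlane := by
    left
    simp only [Complex.sub_re, Complex.one_re]
    linarith [re_lt_one_of_norm_one hz hz1]
  have hcont : Tendsto (fun t : ℝ => -Complex.log (1 - t * z)) (𝓝[<] (1:ℝ))
      (𝓝 (-Complex.log (1 - z))) := by
    apply Tendsto.neg
    apply (continuousAt_clog hslit).tendsto.comp
    apply Filter.Tendsto.mono_left _ nhdsWithin_le_nhds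
    exact (continuous_const.sub (Complex.continuous_ofReal.mul continuous_const)).tendsto'
      1 (1 - z) (by simp)
  rwa [tendsto_nhds_unique hcomp hcont] at hL

lemma boundary_log_series_Icc {z : ℂ} (hz : ‖z‖ = 1) (hz1 : z ≠ 1) :
    Tendsto (fun N : ℕ => ∑ n ∈ Finset.Icc 1 N, z ^ n / n) atTop (𝓝 (-Complex.log (1 - z))) := by
  have h := (boundary_log_series hz hz1).comp (tendsto_add_atTop_nat 1)
  refine h.congr fun N => ?_
  rw [Function.comp_apply]
  have : Finset.range (N+1) = insert 0 (Finset.Icc 1 N) := by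
    ext i; simp [Nat.lt_succ_iff]; omega
  rw [this, Finset.sum_insert (by simp)]
  simp

lemma one_sub_exp_eq (θ : ℝ) : (1:ℂ) - Complex.exp (θ * Complex.I)
    = Complex.exp ((θ/2 : ℝ) * Complex.I) * (-2 * Complex.I) * Complex.sin ((θ/2 : ℝ)) := by
  rw [Complex.sin]
  have e1 : Complex.exp ((θ/2 : ℝ) * Complex.I) * Complex.exp (-((θ/2 : ℝ):ℂ) * Complex.I) = 1 := by
    rw [← Complex.exp_add, show ((θ/2 : ℝ):ℂ) * Complex.I + -((θ/2 : ℝ):ℂ) * Complex.I = 0 by ring,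
      Complex.exp_zero]
  have e2 : Complex.exp ((θ/2 : ℝ) * Complex.I) * Complex.exp (((θ/2 : ℝ):ℂ) * Complex.I)
      = Complex.exp ((θ:ℝ) * Complex.I) := by
    rw [← Complex.exp_add]
    congr 1
    push_cast
    ring
  have hI : Complex.I * Complex.I = -1 := Complex.I_mul_I
  linear_combination (Complex.exp ((θ/2 : ℝ) * Complex.I) * Complex.exp (-((θ/2 : ℝ):ℂ) * Complex.I)
    - Complex.exp ((θ/2 : ℝ) * Complex.I) ^ 2) * hI - e1 + e2

lemma abs_one_sub_exp (θ : ℝ) :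
    ‖1 - Complex.exp (θ * Complex.I)‖ = 2 * |Real.sin (θ/2)| := by
  rw [one_sub_exp_eq θ, norm_mul, norm_mul, Complex.norm_exp_ofReal_mul_I, one_mul,
    ← Complex.ofReal_sin, Complex.norm_real, Real.norm_eq_abs]
  simp

end Aux

theorem stmt_19 (l a b : ℝ) (hl : 0 < l) (ha : 0 < a) (hab : a < b) (hbl : b < l)
    (u : ℝ → ℝ) (hu : ∀ y : ℝ, u y = if y ∈ Set.Icc a b then 1 else 0)
    (uhat : ℤ → ℂ)
    (huhat : ∀ n : ℤ, uhat n = (1 / (l : ℂ)) * ∫ y in (0:ℝ)..l,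
      (u y : ℂ) * Complex.exp (-(2 * Real.pi * Complex.I) * n * y / l))
    (x : ℝ) (hxa : ¬ ∃ m : ℤ, (x - a) / l = m) (hxb : ¬ ∃ m : ℤ, (x - b) / l = m) :
    Tendsto (fun N : ℕ => Complex.I * ∑ n ∈ Finset.Icc 1 N,
        (uhat (-(n : ℤ)) * Complex.exp (-(2 * Real.pi * Complex.I) * n * x / l)
          - uhat (n : ℤ) * Complex.exp (2 * Real.pi * Complex.I * n * x / l)))
      atTop
      (nhds (((1 / Real.pi) *
        Real.log |Real.sin (Real.pi * (x - a) / l) / Real.sin (Real.pi * (x - b) / l)| : ℝ) : ℂ)) := by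
  have hl0 : (l:ℝ) ≠ 0 := hl.ne'
  have hlc : (l:ℂ) ≠ 0 := by exact_mod_cast hl0
  have hπ : Real.pi ≠ 0 := Real.pi_ne_zero
  have hπc : ((Real.pi : ℝ) : ℂ) ≠ 0 := by exact_mod_cast hπ
  -- the integral/Fourier coefficient computation
  have huhat' : ∀ n : ℤ, n ≠ 0 → uhat n =
      (Complex.exp (-(2 * Real.pi * Complex.I) * n * b / l)
        - Complex.exp (-(2 * Real.pi * Complex.I) * n * a / l)) / (-(2 * Real.pi * Complex.I) * n) := by
    intro n hn
    have hnc : (n:ℂ) ≠ 0 := by exact_mod_cast hn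
    set c : ℂ := -(2 * Real.pi * Complex.I) * n / l with hc_def
    have hc : c ≠ 0 := by
      apply div_ne_zero _ hlc
      simp only [neg_ne_zero, mul_ne_zero_iff]
      exact ⟨⟨by norm_num [hπc], Complex.I_ne_zero⟩, hnc⟩
    set g : ℝ → ℂ := fun y => Complex.exp (c * y) with hg_def
    have hgc : Continuous g := by
      apply Complex.continuous_exp.comp
      exact continuous_const.mul Complex.continuous_ofReal
    have harg : ∀ y : ℝ, -(2 * Real.pi * Complex.I) * n * y / l = c * y := by
      intro y
      rw [hc_def]
      field_simp
    have hindint : ∀ s t : ℝ, IntervalIntegrable ((Set.Ioc a b).indicator g) volume s t := by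
      intro s t
      rw [intervalIntegrable_iff]
      exact ((hgc.intervalIntegrable s t).def' ).indicator measurableSet_Ioc
    have hsplit : (∫ y in (0:ℝ)..l, (u y : ℂ) * Complex.exp (-(2 * Real.pi * Complex.I) * n * y / l))
        = ∫ y in a..b, g y := by
      have step1 : (∫ y in (0:ℝ)..l, (u y : ℂ) * Complex.exp (-(2 * Real.pi * Complex.I) * n * y / l))
          = ∫ y in (0:ℝ)..l, (Set.Ioc a b).indicator g y := by
        apply intervalIntegral.integral_congr_ae
        have hae : ∀ᵐ y : ℝ, y ≠ a := by
          have := (Set.countable_singleton a).ae_notMem (μ := volume)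
          simpa using this
        filter_upwards [hae] with y hy _
        rw [hu y, harg y]
        by_cases hmem : y ∈ Set.Ioc a b
        · rw [Set.indicator_of_mem hmem]
          have : y ∈ Set.Icc a b := ⟨le_of_lt hmem.1, hmem.2⟩
          simp [this, hg_def]
        · rw [Set.indicator_of_notMem hmem]
          have : y ∉ Set.Icc a b := by
            intro hmem'
            exact hmem ⟨lt_of_le_of_ne hmem'.1 (Ne.symm hy), hmem'.2⟩
          simp [this]
      have step2 : (∫ y in (0:ℝ)..l, (Set.Ioc a b).indicator g y)
          = (∫ y in (0:ℝ)..a, (Set.Ioc a b).indicator g y)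
            + (∫ y in a..b, (Set.Ioc a b).indicator g y)
            + (∫ y in b..l, (Set.Ioc a b).indicator g y) := by
        rw [← intervalIntegral.integral_add_adjacent_intervals (hindint 0 b) (hindint b l),
          ← intervalIntegral.integral_add_adjacent_intervals (hindint 0 a) (hindint a b)]
      have z1 : (∫ y in (0:ℝ)..a, (Set.Ioc a b).indicator g y) = 0 := by
        rw [intervalIntegral.integral_congr_ae (g := fun _ => (0:ℂ)) ?_, intervalIntegral.integral_zero]
        apply Filter.Eventually.of_forall
        intro y hy
        rw [Set.uIoc_of_le (le_of_lt ha)] at hy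
        exact Set.indicator_of_notMem (fun hmem => absurd hy.2 (not_le.mpr hmem.1)) g
      have z2 : (∫ y in b..l, (Set.Ioc a b).indicator g y) = 0 := by
        rw [intervalIntegral.integral_congr_ae (g := fun _ => (0:ℂ)) ?_, intervalIntegral.integral_zero]
        apply Filter.Eventually.of_forall
        intro y hy
        rw [Set.uIoc_of_le (le_of_lt hbl)] at hy
        exact Set.indicator_of_notMem (fun hmem => absurd hmem.2 (not_le.mpr hy.1)) g
      have m1 : (∫ y in a..b, (Set.Ioc a b).indicator g y) = ∫ y in a..b, g y := by
        apply intervalIntegral.integral_congr_ae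
        apply Filter.Eventually.of_forall
        intro y hy
        rw [Set.uIoc_of_le (le_of_lt hab)] at hy
        exact Set.indicator_of_mem hy g
      rw [step1, step2, z1, z2, m1]
      ring
    rw [huhat n, hsplit, hg_def]
    rw [integral_exp_mul_complex hc]
    rw [hc_def]
    rw [show -(2 * ↑Real.pi * Complex.I) * ↑n / ↑l * ↑b = -(2 * ↑Real.pi * Complex.I) * ↑n * ↑b / ↑l by ring,
      show -(2 * ↑Real.pi * Complex.I) * ↑n / ↑l * ↑a = -(2 * ↑Real.pi * Complex.I) * ↑n * ↑a / ↑l by ring]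
    field_simp
  -- setup
  set θa : ℝ := 2 * Real.pi * (x - a) / l with hθa
  set θb : ℝ := 2 * Real.pi * (x - b) / l with hθb
  set α : ℂ := Complex.exp ((θa : ℂ) * Complex.I) with hα
  set β : ℂ := Complex.exp ((θb : ℂ) * Complex.I) with hβ
  have hexp_ne_one : ∀ (t s : ℝ), (¬ ∃ m : ℤ, (x - s) / l = m) →
      Complex.exp (((2 * Real.pi * (x - s) / l : ℝ) : ℂ) * Complex.I) ≠ 1 := by
    intro t s hs h
    rw [Complex.exp_eq_one_iff] at h
    obtain ⟨m, hm⟩ := h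
    apply hs
    refine ⟨m, ?_⟩
    have hm' : ((2 * Real.pi * (x - s) / l : ℝ) : ℂ) = (m : ℂ) * (2 * Real.pi) := by
      have := mul_right_cancel₀ Complex.I_ne_zero
        (hm.trans (show ((m:ℂ)) * (2 * ↑Real.pi * Complex.I) = ((m:ℂ) * (2 * ↑Real.pi)) * Complex.I by ring))
      exact this
    have hm'' : 2 * Real.pi * (x - s) / l = m * (2 * Real.pi) := by
      exact_mod_cast hm'
    have h2π : (2:ℝ) * Real.pi ≠ 0 := by positivity
    field_simp at hm'' ⊢
    nlinarith [Real.pi_pos]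
  have hα1 : α ≠ 1 := hexp_ne_one 0 a hxa
  have hβ1 : β ≠ 1 := hexp_ne_one 0 b hxb
  have hαn : ‖α‖ = 1 := by rw [hα, Complex.norm_exp_ofReal_mul_I]
  have hβn : ‖β‖ = 1 := by rw [hβ, Complex.norm_exp_ofReal_mul_I]
  have hαin : ‖α⁻¹‖ = 1 := by rw [norm_inv, hαn]; norm_num
  have hβin : ‖β⁻¹‖ = 1 := by rw [norm_inv, hβn]; norm_num
  have hαi1 : α⁻¹ ≠ 1 := fun h => hα1 (inv_eq_one.mp h)
  have hβi1 : β⁻¹ ≠ 1 := fun h => hβ1 (inv_eq_one.mp h)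
  -- the term identity
  have key : ∀ n : ℕ, 1 ≤ n →
      Complex.I * (uhat (-(n : ℤ)) * Complex.exp (-(2 * Real.pi * Complex.I) * n * x / l)
          - uhat (n : ℤ) * Complex.exp (2 * Real.pi * Complex.I * n * x / l))
        = (1 / (2 * (Real.pi : ℂ))) * (β ^ n / n + (β⁻¹) ^ n / n - α ^ n / n - (α⁻¹) ^ n / n) := by
    intro n hn
    have hn0 : (n : ℂ) ≠ 0 := Nat.cast_ne_zero.mpr (by omega)
    have hnz : (n : ℤ) ≠ 0 := by exact_mod_cast (by omega : n ≠ 0)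
    rw [huhat' (n : ℤ) hnz, huhat' (-(n : ℤ)) (neg_ne_zero.mpr hnz)]
    simp only [Int.cast_neg, Int.cast_natCast]
    have f1 : Complex.exp (-(2 * ↑Real.pi * Complex.I) * -(n : ℂ) * b / l)
        * Complex.exp (-(2 * ↑Real.pi * Complex.I) * (n : ℂ) * x / l) = (β⁻¹) ^ n := by
      rw [hβ, ← Complex.exp_neg, ← Complex.exp_nat_mul, ← Complex.exp_add]
      congr 1
      rw [hθb]
      push_cast
      field_simp
      ring
    have f2 : Complex.exp (-(2 * ↑Real.pi * Complex.I) * -(n : ℂ) * a / l)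
        * Complex.exp (-(2 * ↑Real.pi * Complex.I) * (n : ℂ) * x / l) = (α⁻¹) ^ n := by
      rw [hα, ← Complex.exp_neg, ← Complex.exp_nat_mul, ← Complex.exp_add]
      congr 1
      rw [hθa]
      push_cast
      field_simp
      ring
    have f3 : Complex.exp (-(2 * ↑Real.pi * Complex.I) * (n : ℂ) * b / l)
        * Complex.exp (2 * ↑Real.pi * Complex.I * (n : ℂ) * x / l) = β ^ n := by
      rw [hβ, ← Complex.exp_nat_mul, ← Complex.exp_add]
      congr 1
      rw [hθb]
      push_cast
      field_simp
      ring
    have f4 : Complex.exp (-(2 * ↑Real.pi * Complex.I) * (n : ℂ) * a / l)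
        * Complex.exp (2 * ↑Real.pi * Complex.I * (n : ℂ) * x / l) = α ^ n := by
      rw [hα, ← Complex.exp_nat_mul, ← Complex.exp_add]
      congr 1
      rw [hθa]
      push_cast
      field_simp
      ring
    rw [div_mul_eq_mul_div, div_mul_eq_mul_div, sub_mul, sub_mul, f1, f2, f3, f4]
    rw [show -(2*((Real.pi:ℝ):ℂ)*Complex.I) * -(n:ℂ) = Complex.I * (2*Real.pi*n) by ring]
    rw [show -(2*((Real.pi:ℝ):ℂ)*Complex.I) * (n:ℂ) = -(Complex.I * (2*Real.pi*n)) by ring]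
    rw [div_neg, sub_neg_eq_add, ← add_div, ← mul_div_assoc,
      mul_div_mul_left _ _ Complex.I_ne_zero]
    field_simp
    ring
  -- sum identity
  have hfun : ∀ N : ℕ, Complex.I * ∑ n ∈ Finset.Icc 1 N,
      (uhat (-(n : ℤ)) * Complex.exp (-(2 * Real.pi * Complex.I) * n * x / l)
        - uhat (n : ℤ) * Complex.exp (2 * Real.pi * Complex.I * n * x / l))
      = (1 / (2 * (Real.pi : ℂ))) * ((∑ n ∈ Finset.Icc 1 N, β ^ n / n)
          + (∑ n ∈ Finset.Icc 1 N, (β⁻¹) ^ n / n)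
          - (∑ n ∈ Finset.Icc 1 N, α ^ n / n)
          - (∑ n ∈ Finset.Icc 1 N, (α⁻¹) ^ n / n)) := by
    intro N
    rw [Finset.mul_sum, ← Finset.sum_add_distrib, ← Finset.sum_sub_distrib,
      ← Finset.sum_sub_distrib, Finset.mul_sum]
    refine Finset.sum_congr rfl fun n hn => ?_
    rw [key n (Finset.mem_Icc.mp hn).1]
  -- the limit
  have hlim : Tendsto (fun N : ℕ => (1 / (2 * (Real.pi : ℂ))) * ((∑ n ∈ Finset.Icc 1 N, β ^ n / n)
      + (∑ n ∈ Finset.Icc 1 N, (β⁻¹) ^ n / n) - (∑ n ∈ Finset.Icc 1 N, α ^ n / n)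
      - (∑ n ∈ Finset.Icc 1 N, (α⁻¹) ^ n / n))) atTop
      (𝓝 ((1 / (2 * (Real.pi : ℂ))) * ((-Complex.log (1 - β)) + (-Complex.log (1 - β⁻¹))
        - (-Complex.log (1 - α)) - (-Complex.log (1 - α⁻¹))))) := by
    exact ((((boundary_log_series_Icc hβn hβ1).add (boundary_log_series_Icc hβin hβi1)).sub
      (boundary_log_series_Icc hαn hα1)).sub (boundary_log_series_Icc hαin hαi1)).const_mul _
  -- value computation
  have habsα : ‖α‖ = 1 := hαn
  have habsβ : ‖β‖ = 1 := hβn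
  have hsumlog : ∀ z : ℂ, ‖z‖ = 1 → z ≠ 1 →
      Complex.log (1 - z) + Complex.log (1 - z⁻¹)
        = ((2 * Real.log ‖1 - z‖ : ℝ) : ℂ) := by
    intro z hzn hz1
    have habs : ‖z‖ = 1 := hzn
    have hre : 0 < (1 - z).re := by
      have := re_lt_one_of_norm_one hzn hz1
      simp only [Complex.sub_re, Complex.one_re]
      linarith
    have harg : (1 - z).arg ≠ Real.pi := by
      intro h
      rcases Complex.arg_eq_pi_iff.mp h with ⟨h1, _⟩
      linarith
    rw [Complex.inv_eq_conj habs, show (1:ℂ) - (starRingEnd ℂ) z = (starRingEnd ℂ) (1 - z) by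
      rw [map_sub, map_one], Complex.log_conj _ harg, Complex.add_conj, Complex.log_re]
  have hsa : Real.sin (Real.pi * (x - a) / l) ≠ 0 := by
    intro h
    rcases Real.sin_eq_zero_iff.mp h with ⟨m, hm⟩
    refine hxa ⟨m, ?_⟩
    have h2 : Real.pi * ((x - a) / l) = Real.pi * m := by linear_combination -hm
    exact mul_left_cancel₀ hπ h2
  have hsb : Real.sin (Real.pi * (x - b) / l) ≠ 0 := by
    intro h
    rcases Real.sin_eq_zero_iff.mp h with ⟨m, hm⟩
    refine hxb ⟨m, ?_⟩
    have h2 : Real.pi * ((x - b) / l) = Real.pi * m := by linear_combination -hm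
    exact mul_left_cancel₀ hπ h2
  have habs1α : ‖1 - α‖ = 2 * |Real.sin (Real.pi * (x - a) / l)| := by
    rw [hα, abs_one_sub_exp θa]
    congr 2
    rw [hθa]; ring
  have habs1β : ‖1 - β‖ = 2 * |Real.sin (Real.pi * (x - b) / l)| := by
    rw [hβ, abs_one_sub_exp θb]
    congr 2
    rw [hθb]; ring
  have hval : (1 / (2 * (Real.pi : ℂ))) * ((-Complex.log (1 - β)) + (-Complex.log (1 - β⁻¹))
        - (-Complex.log (1 - α)) - (-Complex.log (1 - α⁻¹)))
      = (((1 / Real.pi) *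
        Real.log |Real.sin (Real.pi * (x - a) / l) / Real.sin (Real.pi * (x - b) / l)| : ℝ) : ℂ) := by
    have e : (-Complex.log (1 - β)) + (-Complex.log (1 - β⁻¹))
        - (-Complex.log (1 - α)) - (-Complex.log (1 - α⁻¹))
        = (Complex.log (1 - α) + Complex.log (1 - α⁻¹))
          - (Complex.log (1 - β) + Complex.log (1 - β⁻¹)) := by ring
    rw [e, hsumlog α hαn hα1, hsumlog β hβn hβ1, habs1α, habs1β]
    have hreal_eq : (1 / (2 * Real.pi)) * ((2 * Real.log (2 * |Real.sin (Real.pi * (x - a) / l)|))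
          - (2 * Real.log (2 * |Real.sin (Real.pi * (x - b) / l)|)))
        = (1 / Real.pi) * Real.log |Real.sin (Real.pi * (x - a) / l) / Real.sin (Real.pi * (x - b) / l)| := by
      rw [Real.log_mul two_ne_zero (abs_ne_zero.mpr hsa), Real.log_mul two_ne_zero (abs_ne_zero.mpr hsb),
        abs_div, Real.log_div (abs_ne_zero.mpr hsa) (abs_ne_zero.mpr hsb)]
      field_simp
      ring
    rw [← hreal_eq]
    push_cast
    ring
  rw [← hval]
  exact hlim.congr fun N => (hfun N).symm
end
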